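/- arXiv:2412.01184 — 6 statements merged into one kernel-verified Lean document; each statement's English description precedes it below -/
import Mathlib

section
/- Let d₁, d₂ ≥ 2 be integers and let L = L_{d₁d₂} be the associated 5×5 real matrix. Then for every integer k ≥ 1, the matrix kI − L is invertible, and the operator norm of (kI − L)⁻¹ (with respect to the Euclidean norm on ℝ⁵) is at most 5/(4k). -/
/-! Since `L` has a single off-diagonal entry, `(k I - L)⁻¹` is explicit: a diagonal matrix with
entries at most `1 / k` plus one matrix unit with coefficient `2 / ((k + d₂)(k + 2)) ≤ 1 / (4k)`.
The L² operator norm of a diagonal matrix is its largest entry in absolute value and that of a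
matrix unit is the absolute value of its coefficient, so subadditivity gives
`1 / k + 1 / (4k) = 5 / (4k)`. -/

noncomputable section

/-- The 5×5 matrix `L_{d₁d₂}`: zero except `(L)₂₂ = −d₂`, `(L)₃₂ = 2`, `(L)₃₃ = −2`
(rows and columns indexed 1,…,5; here indexed `0,…,4`). -/
def Lmat (d₁ d₂ : ℕ) : Matrix (Fin 5) (Fin 5) ℝ :=
  Matrix.of fun i j =>
    if i = 1 ∧ j = 1 then -(d₂ : ℝ)
    else if i = 2 ∧ j = 1 then 2
    else if i = 2 ∧ j = 2 then -2
    else 0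

open Matrix
open scoped Matrix.Norms.L2Operator

namespace Matrix

variable {𝕜 n : Type*} [RCLike 𝕜] [Fintype n] [DecidableEq n]

theorem l2_opNorm_single (i j : n) (c : 𝕜) : ‖single i j c‖ = ‖c‖ := by
  have hsq : (single i j c)ᴴ * single i j c = diagonal (Pi.single j (star c * c)) := by
    rw [conjTranspose_single, single_mul_single_same, diagonal_single]
  have h := l2_opNorm_conjTranspose_mul_self (single i j c)
  rw [hsq, l2_opNorm_diagonal, Pi.norm_single, norm_mul, norm_star] at h
  exact (mul_self_inj (norm_nonneg _) (norm_nonneg _)).mp h.symm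

end Matrix

def LmatResolvent (d₂ : ℕ) (k : ℝ) : Matrix (Fin 5) (Fin 5) ℝ :=
  diagonal ![k⁻¹, (k + d₂)⁻¹, (k + 2)⁻¹, k⁻¹, k⁻¹] + single 2 1 (2 / ((k + d₂) * (k + 2)))

theorem Lmat_mul_LmatResolvent (d₁ d₂ : ℕ) {k : ℝ} (hk : 0 < k) :
    (k • (1 : Matrix (Fin 5) (Fin 5) ℝ) - Lmat d₁ d₂) * LmatResolvent d₂ k = 1 := by
  have hkd : k + d₂ ≠ 0 := by positivity
  have hk2 : k + 2 ≠ 0 := by positivity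
  ext i j
  fin_cases i <;> fin_cases j <;>
    simp [Lmat, LmatResolvent, mul_apply, Fin.sum_univ_five, single_apply, one_apply,
      hk.ne'] <;>
    field_simp <;> ring

theorem norm_LmatResolvent_le (d₂ : ℕ) (hd₂ : 2 ≤ d₂) {k : ℝ} (hk : 0 < k) :
    ‖LmatResolvent d₂ k‖ ≤ 5 / (4 * k) := by
  have hd : (2 : ℝ) ≤ d₂ := by exact_mod_cast hd₂
  have hdiag : ‖(diagonal ![k⁻¹, (k + d₂)⁻¹, (k + 2)⁻¹, k⁻¹, k⁻¹] : Matrix (Fin 5) (Fin 5) ℝ)‖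
      ≤ k⁻¹ := by
    rw [l2_opNorm_diagonal, pi_norm_le_iff_of_nonneg (by positivity)]
    intro i
    fin_cases i <;> simp [abs_of_pos hk] <;>
      rw [abs_of_pos (by positivity)] <;> gcongr <;> linarith
  -- `(k + d₂)(k + 2) ≥ (k + 2)² ≥ 8k` by AM-GM.
  have hsingle : ‖(single 2 1 (2 / ((k + d₂) * (k + 2))) : Matrix (Fin 5) (Fin 5) ℝ)‖
      ≤ (4 * k)⁻¹ := by
    rw [l2_opNorm_single, Real.norm_of_nonneg (by positivity),
      div_le_iff₀ (by positivity)]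
    field_simp
    nlinarith [sq_nonneg (k - 2)]
  calc ‖LmatResolvent d₂ k‖ ≤ k⁻¹ + (4 * k)⁻¹ :=
        (norm_add_le _ _).trans (add_le_add hdiag hsingle)
    _ = 5 / (4 * k) := by field_simp; norm_num

theorem Lmat_resolvent_bound_general (d₁ d₂ : ℕ) (hd₂ : 2 ≤ d₂)
    (k : ℕ) (hk : 1 ≤ k) :
    IsUnit ((k : ℝ) • (1 : Matrix (Fin 5) (Fin 5) ℝ) - Lmat d₁ d₂) ∧
      ‖Matrix.toEuclideanCLM (𝕜 := ℝ)
        (((k : ℝ) • (1 : Matrix (Fin 5) (Fin 5) ℝ) - Lmat d₁ d₂)⁻¹)‖ ≤ 5 / (4 * k) := by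
  have hk : (0 : ℝ) < k := by exact_mod_cast hk
  have hinv := Lmat_mul_LmatResolvent d₁ d₂ hk
  refine ⟨IsUnit.of_mul_eq_one _ hinv, ?_⟩
  rw [inv_eq_right_inv hinv, l2_opNorm_toEuclideanCLM]
  exact norm_LmatResolvent_le d₂ hd₂ hk

/-- For every integer `k ≥ 1`, the matrix `k I − L_{d₁d₂}` is invertible and the operator norm
(w.r.t. the Euclidean norm on `ℝ⁵`) of its inverse is at most `5/(4k)`. -/
theorem Lmat_resolvent_bound (d₁ d₂ : ℕ) (hd₁ : 2 ≤ d₁) (hd₂ : 2 ≤ d₂)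
    (k : ℕ) (hk : 1 ≤ k) :
    IsUnit ((k : ℝ) • (1 : Matrix (Fin 5) (Fin 5) ℝ) - Lmat d₁ d₂) ∧
      ‖Matrix.toEuclideanCLM (𝕜 := ℝ)
        (((k : ℝ) • (1 : Matrix (Fin 5) (Fin 5) ℝ) - Lmat d₁ d₂)⁻¹)‖ ≤ 5 / (4 * k) :=
  Lmat_resolvent_bound_general d₁ d₂ hd₂ k hk
end
end

section
/- Let d₁, d₂ ≥ 2 be integers, let L = L_{d₁d₂}, let T > 0, and let R : ℝ × ℝ⁵ → ℝ⁵ be smooth. Suppose x₁, x₂ : [0, T] → ℝ⁵ are continuous on [0, T], differentiable on (0, T], satisfy x'(t) = (1/t)·L·x(t) + R(t, x(t)) for all t ∈ (0, T], and x₁(0) = x₂(0) = 0. Then x₁(t) = x₂(t) for all t ∈ [0, T]. -/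
noncomputable section

/-- The action of `L_{d₁d₂}` on `ℝ⁵` (with the Euclidean norm). -/
def Lop (d₁ d₂ : ℕ) (x : EuclideanSpace ℝ (Fin 5)) : EuclideanSpace ℝ (Fin 5) :=
  WithLp.toLp 2 ((Lmat d₁ d₂).mulVec x)

lemma Lop_dissipative {d₁ d₂ : ℕ} (hd₂ : 2 ≤ d₂) (z : EuclideanSpace ℝ (Fin 5)) :
    (inner ℝ z (Lop d₁ d₂ z) : ℝ) ≤ 0 := by
  have h2 : (2:ℝ) ≤ d₂ := by exact_mod_cast hd₂
  have key : (inner ℝ z (Lop d₁ d₂ z) : ℝ)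
      = -(d₂:ℝ) * (z 1)^2 + 2 * (z 1) * (z 2) - 2 * (z 2)^2 := by
    simp only [Lop, Lmat, PiLp.inner_apply, RCLike.inner_apply, starRingEnd_apply, star_trivial,
      PiLp.toLp_apply, Matrix.mulVec, dotProduct, Fin.sum_univ_five, Matrix.of_apply]
    simp only [Fin.reduceEq, if_false, and_true, true_and, and_false, false_and, if_true]
    norm_num
    ring
  rw [key]
  nlinarith [sq_nonneg (z 1 - z 2), sq_nonneg (z 1), sq_nonneg (z 2)]

lemma Lop_sub (d₁ d₂ : ℕ) (a b : EuclideanSpace ℝ (Fin 5)) :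
    Lop d₁ d₂ (a - b) = Lop d₁ d₂ a - Lop d₁ d₂ b :=
  by unfold Lop; rw [WithLp.ofLp_sub, Matrix.mulVec_sub, WithLp.toLp_sub]

open Set Metric Filter Real
open scoped Topology

/-- Uniqueness for the singular initial value problem
`x'(t) = (1/t) L x(t) + R(t, x(t))`, `x(0) = 0`, on `[0, T]`, where `R` is smooth. -/
theorem singular_ivp_unique
    (d₁ d₂ : ℕ) (hd₁ : 2 ≤ d₁) (hd₂ : 2 ≤ d₂)
    (T : ℝ) (hT : 0 < T)
    (R : ℝ → EuclideanSpace ℝ (Fin 5) → EuclideanSpace ℝ (Fin 5))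
    (hR : ContDiff ℝ (⊤ : ℕ∞) (fun p : ℝ × EuclideanSpace ℝ (Fin 5) => R p.1 p.2))
    (x₁ x₂ : ℝ → EuclideanSpace ℝ (Fin 5))
    (hc₁ : ContinuousOn x₁ (Set.Icc 0 T)) (hc₂ : ContinuousOn x₂ (Set.Icc 0 T))
    (hode₁ : ∀ t ∈ Set.Ioc 0 T,
      HasDerivWithinAt x₁ ((1/t) • Lop d₁ d₂ (x₁ t) + R t (x₁ t)) (Set.Icc 0 T) t)
    (hode₂ : ∀ t ∈ Set.Ioc 0 T,
      HasDerivWithinAt x₂ ((1/t) • Lop d₁ d₂ (x₂ t) + R t (x₂ t)) (Set.Icc 0 T) t)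
    (h0₁ : x₁ 0 = 0) (h0₂ : x₂ 0 = 0) :
    ∀ t ∈ Set.Icc 0 T, x₁ t = x₂ t := by
  classical
  -- A bound on the norms of the two solutions
  obtain ⟨M₁, hM₁⟩ := isCompact_Icc.exists_bound_of_continuousOn hc₁
  obtain ⟨M₂, hM₂⟩ := isCompact_Icc.exists_bound_of_continuousOn hc₂
  set M : ℝ := max M₁ M₂ with hM
  have hmem : ∀ t ∈ Set.Icc 0 T,
      x₁ t ∈ closedBall (0 : EuclideanSpace ℝ (Fin 5)) M ∧
      x₂ t ∈ closedBall (0 : EuclideanSpace ℝ (Fin 5)) M := by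
    intro t ht
    constructor
    · simp only [mem_closedBall, dist_zero_right]
      exact le_trans (hM₁ t ht) (le_max_left _ _)
    · simp only [mem_closedBall, dist_zero_right]
      exact le_trans (hM₂ t ht) (le_max_right _ _)
  -- Lipschitz constant for R on a compact convex set
  set S : Set (ℝ × EuclideanSpace ℝ (Fin 5)) :=
    Set.Icc 0 T ×ˢ closedBall (0 : EuclideanSpace ℝ (Fin 5)) M with hS
  have hSconv : Convex ℝ S := (convex_Icc 0 T).prod (convex_closedBall 0 M)
  have hScomp : IsCompact S := isCompact_Icc.prod (isCompact_closedBall 0 M)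
  have hfd : Continuous (fderiv ℝ (fun p : ℝ × EuclideanSpace ℝ (Fin 5) => R p.1 p.2)) :=
    hR.continuous_fderiv (by simp)
  obtain ⟨C₀, hC₀⟩ := hScomp.exists_bound_of_continuousOn hfd.continuousOn
  set C : ℝ := max C₀ 0 with hCdef
  have hC0 : (0:ℝ) ≤ C := le_max_right _ _
  have hLip : ∀ t ∈ Set.Icc 0 T, ‖R t (x₁ t) - R t (x₂ t)‖ ≤ C * ‖x₁ t - x₂ t‖ := by
    intro t ht
    have h1 := (hmem t ht).1
    have h2 := (hmem t ht).2
    have hdiff : ∀ p ∈ S, DifferentiableAt ℝ (fun p : ℝ × EuclideanSpace ℝ (Fin 5) => R p.1 p.2) p :=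
      fun p _ => (hR.differentiable (by simp)).differentiableAt
    have hbd : ∀ p ∈ S, ‖fderiv ℝ (fun p : ℝ × EuclideanSpace ℝ (Fin 5) => R p.1 p.2) p‖ ≤ C :=
      fun p hp => le_trans (hC₀ p hp) (le_max_left _ _)
    have key := hSconv.norm_image_sub_le_of_norm_fderiv_le hdiff hbd
      (x := (t, x₂ t)) (y := (t, x₁ t)) ⟨ht, h2⟩ ⟨ht, h1⟩
    have hnorm : ‖((t, x₁ t) : ℝ × EuclideanSpace ℝ (Fin 5)) - (t, x₂ t)‖ = ‖x₁ t - x₂ t‖ := by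
      simp [Prod.norm_def, max_eq_right (norm_nonneg _), Prod.sub_def]
    calc ‖R t (x₁ t) - R t (x₂ t)‖
        ≤ C * ‖((t, x₁ t) : ℝ × EuclideanSpace ℝ (Fin 5)) - (t, x₂ t)‖ := key
      _ = C * ‖x₁ t - x₂ t‖ := by rw [hnorm]
  -- The difference and its derivative
  set y : ℝ → EuclideanSpace ℝ (Fin 5) := fun t => x₁ t - x₂ t with hy
  set v : ℝ → EuclideanSpace ℝ (Fin 5) :=
    fun t => (1/t) • Lop d₁ d₂ (y t) + (R t (x₁ t) - R t (x₂ t)) with hv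
  have hyderiv : ∀ t ∈ Set.Ioc 0 T, HasDerivWithinAt y (v t) (Set.Icc 0 T) t := by
    intro t ht
    have h := (hode₁ t ht).sub (hode₂ t ht)
    refine h.congr_deriv ?_
    simp only [hv, hy, Lop_sub, smul_sub]
    abel
  -- The squared norm of the difference
  set φ : ℝ → ℝ := fun t => (inner ℝ (y t) (y t) : ℝ) with hφ
  set φ' : ℝ → ℝ := fun t => 2 * (inner ℝ (y t) (v t) : ℝ) with hφ'
  have hφnn : ∀ t, 0 ≤ φ t := fun t => real_inner_self_nonneg
  have hφc : ContinuousOn φ (Set.Icc 0 T) := (hc₁.sub hc₂).inner (hc₁.sub hc₂)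
  have hφd : ∀ t ∈ Set.Ioc 0 T, HasDerivWithinAt φ (φ' t) (Set.Icc 0 T) t := by
    intro t ht
    have h := (hyderiv t ht).inner ℝ (hyderiv t ht)
    refine h.congr_deriv ?_
    symm
    show 2 * (inner ℝ (y t) (v t) : ℝ) = _
    rw [two_mul]
    congr 1
    exact real_inner_comm _ _
  have hφbound : ∀ t ∈ Set.Ioc 0 T, φ' t ≤ 2 * C * φ t := by
    intro t ht
    have htI : t ∈ Set.Icc 0 T := ⟨le_of_lt ht.1, ht.2⟩
    have h1 : (inner ℝ (y t) ((1/t) • Lop d₁ d₂ (y t)) : ℝ) ≤ 0 := by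
      rw [real_inner_smul_right]
      have h1t : (0:ℝ) ≤ 1/t := div_nonneg zero_le_one ht.1.le
      exact mul_nonpos_of_nonneg_of_nonpos h1t (Lop_dissipative hd₂ (y t))
    have h2 : (inner ℝ (y t) (R t (x₁ t) - R t (x₂ t)) : ℝ) ≤ C * φ t := by
      calc (inner ℝ (y t) (R t (x₁ t) - R t (x₂ t)) : ℝ)
          ≤ ‖y t‖ * ‖R t (x₁ t) - R t (x₂ t)‖ := real_inner_le_norm _ _
        _ ≤ ‖y t‖ * (C * ‖x₁ t - x₂ t‖) :=
            mul_le_mul_of_nonneg_left (hLip t htI) (norm_nonneg _)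
        _ = C * φ t := by
            simp only [hφ, hy, real_inner_self_eq_norm_sq]
            ring
    have hsplit : φ' t = 2 * ((inner ℝ (y t) ((1/t) • Lop d₁ d₂ (y t)) : ℝ)
        + (inner ℝ (y t) (R t (x₁ t) - R t (x₂ t)) : ℝ)) := by
      simp [hφ', hv, inner_add_right]
    rw [hsplit]
    nlinarith [h1, h2]
  -- Grönwall on [ε, T]
  have gron : ∀ ε ∈ Set.Ioc 0 T, ∀ s ∈ Set.Icc ε T, φ s ≤ φ ε * exp (2 * C * T) := by
    intro ε hε s hs
    have hsub : Set.Icc ε T ⊆ Set.Icc 0 T := Set.Icc_subset_Icc (le_of_lt hε.1) le_rfl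
    have key := le_gronwallBound_of_liminf_deriv_right_le (f := φ) (f' := φ')
      (δ := φ ε) (K := 2 * C) (ε := 0) (a := ε) (b := T)
      (hφc.mono hsub)
      (fun s hs r hr => by
        have hsIoc : s ∈ Set.Ioc 0 T := ⟨lt_of_lt_of_le hε.1 hs.1, le_of_lt hs.2⟩
        have h1 : HasDerivWithinAt φ (φ' s) (Set.Icc s T) s :=
          (hφd s hsIoc).mono (Set.Icc_subset_Icc (le_of_lt hsIoc.1) le_rfl)
        have h1' : HasDerivWithinAt φ (φ' s) (Set.Ici s ∩ Set.Iic T) s := by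
          rw [Set.Ici_inter_Iic]; exact h1
        have h2 : HasDerivWithinAt φ (φ' s) (Set.Ici s) s :=
          (hasDerivWithinAt_inter (Iic_mem_nhds hs.2)).mp h1'
        exact h2.liminf_right_slope_le hr)
      le_rfl
      (fun s hs => by
        have := hφbound s ⟨lt_of_lt_of_le hε.1 hs.1, le_of_lt hs.2⟩
        simpa using this)
    have h3 := key s hs
    rw [gronwallBound_ε0] at h3
    refine le_trans h3 (mul_le_mul_of_nonneg_left (exp_le_exp.2 ?_) (hφnn ε))
    have hs1 : s - ε ≤ T := by
      have := hs.2
      have := hε.1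
      linarith
    nlinarith [hC0, hs1, hs.1, hε.1.le]
  -- Conclusion
  intro t ht
  rcases eq_or_lt_of_le ht.1 with h0 | h0
  · rw [← h0, h0₁, h0₂]
  · have hφt : φ t ≤ 0 := by
      by_contra hpos
      push_neg at hpos
      have hexp : (0:ℝ) < exp (2 * C * T) := exp_pos _
      have hη : 0 < φ t / (2 * exp (2 * C * T)) := by positivity
      have h00 : φ 0 = 0 := by simp [hφ, hy, h0₁, h0₂]
      have htd : Tendsto φ (𝓝[Set.Icc 0 T] 0) (𝓝 0) := by
        have h := hφc 0 ⟨le_rfl, le_of_lt hT⟩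
        rw [ContinuousWithinAt, h00] at h
        exact h
      have hle : 𝓝[>] (0:ℝ) ≤ 𝓝[Set.Icc 0 T] 0 := by
        rw [← nhdsWithin_Ioc_eq_nhdsGT hT]
        exact nhdsWithin_mono _ Set.Ioc_subset_Icc_self
      have hev : ∀ᶠ ε in 𝓝[>] (0:ℝ), φ ε < φ t / (2 * exp (2 * C * T)) :=
        (htd.mono_left hle).eventually (gt_mem_nhds hη)
      have hev2 : ∀ᶠ ε in 𝓝[>] (0:ℝ), ε ∈ Set.Ioc 0 t :=
        Ioc_mem_nhdsGT_of_mem ⟨le_rfl, h0⟩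
      obtain ⟨ε, hε1, hε2⟩ := (hev.and hev2).exists
      have hεIoc : ε ∈ Set.Ioc 0 T := ⟨hε2.1, le_trans hε2.2 ht.2⟩
      have hg := gron ε hεIoc t ⟨hε2.2, ht.2⟩
      have h5 : φ ε * exp (2 * C * T) < (φ t / (2 * exp (2 * C * T))) * exp (2 * C * T) :=
        mul_lt_mul_of_pos_right hε1 hexp
      have h6 : (φ t / (2 * exp (2 * C * T))) * exp (2 * C * T) = φ t / 2 := by
        field_simp
      linarith [hg, h5, h6, hpos]
    have hzero : (inner ℝ (y t) (y t) : ℝ) = 0 := le_antisymm hφt (hφnn t)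
    have : y t = 0 := by
      have := inner_self_eq_zero (𝕜 := ℝ).mp hzero
      exact this
    exact sub_eq_zero.mp this
end
end

section
/- Let d₁ ≥ 2 be an integer, d₂ ∈ {2, 9}, 0 < t* ≤ 1.5, and let L = L_{d₁d₂}. Suppose F : [0, t*] → ℝ⁵ is continuous and μ : [0, t*] → ℝ⁵ is continuous with μ(0) = 0, differentiable on (0, t*], and satisfies μ'(t) = (1/t)·L·μ(t) + F(t) for all t ∈ (0, t*]. Then sup_{t ∈ [0,t*]} |μ(t)| + sup_{t ∈ (0,t*]} |μ'(t)| ≤ 25 · sup_{t ∈ [0,t*]} |F(t)|. -/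
/-!
Componentwise the system decouples into scalar singular equations `g' + (k / t) g = f` with
`k ∈ {0, d₂, 2}`; the integrating factor `t ^ k` turns each into `(t ^ k g)' = t ^ k f`, whence
`|g t| ≤ sup |f| · t / (k + 1)`. Solving the rows in the order `0, 3, 4, 1, 2` gives
`‖μ t‖ ≤ 5 M t` and `‖L μ t‖ ≤ 4 M t` for `M = sup |F|`, so `‖μ'‖ ≤ ‖L μ‖ / t + ‖F‖ ≤ 5 M`,
and `t ≤ 3 / 2` gives the total `12.5 M`.
-/

noncomputable section

open Set

theorem IsCompact.norm_le_iSup_norm_of_continuousOn {α E : Type*} [TopologicalSpace α]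
    [NormedAddCommGroup E] {s : Set α} (hs : IsCompact s) {f : α → E} (hf : ContinuousOn f s)
    {x : α} (hx : x ∈ s) :
    ‖f x‖ ≤ ⨆ r : s, ‖f r‖ := by
  obtain ⟨C, hC⟩ := hs.exists_bound_of_continuousOn hf
  exact le_ciSup (f := fun r : s => ‖f r‖) ⟨C, by rintro _ ⟨r, rfl⟩; exact hC r r.2⟩ ⟨x, hx⟩

theorem EuclideanSpace.norm_le_sum_abs {ι : Type*} [Fintype ι] (x : EuclideanSpace ℝ ι) :
    ‖x‖ ≤ ∑ i, |x i| :=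
  calc ‖x‖ = ‖∑ i, x i • EuclideanSpace.basisFun ι ℝ i‖ := by
        conv_lhs => rw [← (EuclideanSpace.basisFun ι ℝ).sum_repr x]
        simp
    _ ≤ ∑ i, ‖x i • EuclideanSpace.basisFun ι ℝ i‖ := norm_sum_le _ _
    _ = ∑ i, |x i| := by simp [norm_smul]

theorem abs_le_of_abs_deriv_le_mul_pow {T M : ℝ} {k : ℕ} {g g' : ℝ → ℝ}
    (hgc : ContinuousOn g (Icc 0 T)) (hg0 : g 0 = 0)
    (hgd : ∀ t ∈ Ioo 0 T, HasDerivAt g (g' t) t)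
    (hbound : ∀ t ∈ Ioo 0 T, |g' t| ≤ M * t ^ k) {t : ℝ} (ht : t ∈ Icc 0 T) :
    |g t| ≤ M / (k + 1) * t ^ (k + 1) := by
  set φ : ℝ → ℝ := fun s => M / (k + 1) * s ^ (k + 1)
  have hφ (s : ℝ) : HasDerivAt φ (M * s ^ k) s := by
    refine ((hasDerivAt_pow (k + 1) s).const_mul (M / (k + 1))).congr_deriv ?_
    push_cast [Nat.add_sub_cancel]
    field_simp
  have hφ_ge (σ : ℝ) (hσ : |σ| = 1) : σ * g t ≤ φ t := by
    have hmono : MonotoneOn (fun s => φ s - σ * g s) (Icc 0 T) := by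
      refine monotoneOn_of_hasDerivWithinAt_nonneg (f' := fun s => M * s ^ k - σ * g' s)
        (convex_Icc 0 T)
        ((continuous_const.mul (continuous_pow _)).continuousOn.sub (continuousOn_const.mul hgc))
        (fun s hs => ?_) (fun s hs => ?_)
      · rw [interior_Icc] at hs ⊢
        exact ((hφ s).sub ((hgd s hs).const_mul σ)).hasDerivWithinAt
      · rw [interior_Icc] at hs
        have : σ * g' s ≤ M * s ^ k :=
          calc σ * g' s ≤ |σ * g' s| := le_abs_self _
            _ = |g' s| := by rw [abs_mul, hσ, one_mul]
            _ ≤ M * s ^ k := hbound s hs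
        linarith
    have := hmono ⟨le_rfl, ht.1.trans ht.2⟩ ht ht.1
    simpa [φ, hg0] using this
  exact abs_le.2 ⟨by linarith [hφ_ge (-1) (by norm_num)], by linarith [hφ_ge 1 (by norm_num)]⟩

theorem abs_le_of_abs_deriv_add_div_mul_le {T M : ℝ} (k : ℕ) {g g' : ℝ → ℝ}
    (hgc : ContinuousOn g (Icc 0 T)) (hg0 : g 0 = 0)
    (hgd : ∀ t ∈ Ioo 0 T, HasDerivAt g (g' t) t)
    (hbound : ∀ t ∈ Ioo 0 T, |g' t + k / t * g t| ≤ M) {t : ℝ} (ht : t ∈ Icc 0 T) :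
    |g t| ≤ M / (k + 1) * t := by
  have hfactor : ∀ s ∈ Ioo 0 T,
      HasDerivAt (fun u => u ^ k * g u) (s ^ k * (g' s + k / s * g s)) s := by
    intro s hs
    refine ((hasDerivAt_pow k s).mul (hgd s hs)).congr_deriv ?_
    rcases k with _ | k
    · simp
    · push_cast [Nat.add_sub_cancel]
      field_simp [hs.1.ne']
      ring
  have hint := abs_le_of_abs_deriv_le_mul_pow (g := fun u => u ^ k * g u)
    ((continuous_pow k).continuousOn.mul hgc) (by simp [hg0]) hfactor (fun s hs => by
      rw [abs_mul, abs_of_pos (pow_pos hs.1 k), mul_comm]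
      exact mul_le_mul_of_nonneg_right (hbound s hs) (pow_nonneg hs.1.le k)) ht
  rcases ht.1.eq_or_lt with rfl | htpos
  · simp [hg0]
  · rw [abs_mul, abs_of_pos (pow_pos htpos k), pow_succ, mul_left_comm] at hint
    exact le_of_mul_le_mul_left hint (pow_pos htpos k)

theorem Lop_eq (d₁ d₂ : ℕ) (x : EuclideanSpace ℝ (Fin 5)) :
    Lop d₁ d₂ x = !₂[0, -d₂ * x 1, 2 * x 1 - 2 * x 2, 0, 0] := by
  ext i
  fin_cases i <;> simp [Lop, Lmat, Matrix.mulVec, dotProduct, Fin.sum_univ_five]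
  ring

theorem norm_Lop_le (d₁ d₂ : ℕ) (x : EuclideanSpace ℝ (Fin 5)) :
    ‖Lop d₁ d₂ x‖ ≤ (d₂ + 2) * |x 1| + 2 * |x 2| := by
  refine (EuclideanSpace.norm_le_sum_abs _).trans ?_
  simp only [Lop_eq, Fin.sum_univ_five]
  have h12 := abs_sub (2 * x 1) (2 * x 2)
  simp only [abs_mul, abs_two] at h12
  simp [abs_mul]
  linarith

structure IsSingularSolution {E : Type*} [NormedAddCommGroup E] [NormedSpace ℝ E]
    (A : E → E) (T : ℝ) (F μ μ' : ℝ → E) : Prop where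
  continuousOn : ContinuousOn μ (Icc 0 T)
  map_zero : μ 0 = 0
  hasDerivWithinAt : ∀ t ∈ Ioc 0 T, HasDerivWithinAt μ (μ' t) (Icc 0 T) t
  ode : ∀ t ∈ Ioc 0 T, μ' t = (1 / t) • A (μ t) + F t

namespace IsSingularSolution

section Components

variable {ι : Type*} [Fintype ι] {A : EuclideanSpace ℝ ι → EuclideanSpace ℝ ι} {T : ℝ}
  {F μ μ' : ℝ → EuclideanSpace ℝ ι}

theorem ode_apply (h : IsSingularSolution A T F μ μ') {t : ℝ} (ht : t ∈ Ioc 0 T) (i : ι) :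
    μ' t i = A (μ t) i / t + F t i := by
  rw [h.ode t ht]
  simp [div_eq_inv_mul]

theorem abs_apply_le (h : IsSingularSolution A T F μ μ') (i : ι) (k : ℕ) {C : ℝ}
    (hC : ∀ t ∈ Ioo 0 T, |μ' t i + k / t * μ t i| ≤ C) {t : ℝ} (ht : t ∈ Icc 0 T) :
    |μ t i| ≤ C / (k + 1) * t := by
  refine abs_le_of_abs_deriv_add_div_mul_le k
    ((EuclideanSpace.proj i).continuous.comp_continuousOn h.continuousOn)
    (by simp [h.map_zero]) (fun s hs => ?_) hC ht
  have hs' : HasDerivAt μ (μ' s) s :=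
    (h.hasDerivWithinAt s (Ioo_subset_Ioc_self hs)).hasDerivAt (Icc_mem_nhds hs.1 hs.2)
  exact (EuclideanSpace.proj i).hasFDerivAt.comp_hasDerivAt s hs'

end Components

section Lop

variable {d₁ d₂ : ℕ} {T M : ℝ} {F μ μ' : ℝ → EuclideanSpace ℝ (Fin 5)}

theorem abs_apply_le_of_row_eq_zero (h : IsSingularSolution (Lop d₁ d₂) T F μ μ')
    (hM : ∀ t ∈ Icc 0 T, ‖F t‖ ≤ M) {i : Fin 5} (hi : i = 0 ∨ i = 3 ∨ i = 4) {t : ℝ}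
    (ht : t ∈ Icc 0 T) : |μ t i| ≤ M * t := by
  have hrow : ∀ s ∈ Ioo 0 T, μ' s i = F s i := fun s hs => by
    rw [h.ode_apply (Ioo_subset_Ioc_self hs)]
    rcases hi with rfl | rfl | rfl <;> simp [Lop_eq]
  simpa using h.abs_apply_le i 0 (C := M) (fun s hs => by
    simpa [hrow s hs] using (PiLp.norm_apply_le (F s) i).trans (hM s (Ioo_subset_Icc_self hs))) ht

theorem add_one_mul_abs_apply_one_le (h : IsSingularSolution (Lop d₁ d₂) T F μ μ')
    (hM : ∀ t ∈ Icc 0 T, ‖F t‖ ≤ M) {t : ℝ} (ht : t ∈ Icc 0 T) :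
    (d₂ + 1) * |μ t 1| ≤ M * t := by
  have hrow : ∀ s ∈ Ioo 0 T, μ' s 1 + d₂ / s * μ s 1 = F s 1 := fun s hs => by
    rw [h.ode_apply (Ioo_subset_Ioc_self hs)]
    simp [Lop_eq]
    ring
  have := h.abs_apply_le 1 d₂ (C := M) (fun s hs => by
    simpa [hrow s hs] using (PiLp.norm_apply_le (F s) 1).trans (hM s (Ioo_subset_Icc_self hs))) ht
  rwa [div_mul_eq_mul_div, le_div_iff₀' (by positivity)] at this

theorem abs_apply_one_le (h : IsSingularSolution (Lop d₁ d₂) T F μ μ')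
    (hM : ∀ t ∈ Icc 0 T, ‖F t‖ ≤ M) {t : ℝ} (ht : t ∈ Icc 0 T) : |μ t 1| ≤ M * t := by
  refine le_trans ?_ (h.add_one_mul_abs_apply_one_le hM ht)
  exact le_mul_of_one_le_left (abs_nonneg _) (le_add_of_nonneg_left (Nat.cast_nonneg d₂))

theorem abs_apply_two_le (h : IsSingularSolution (Lop d₁ d₂) T F μ μ')
    (hM : ∀ t ∈ Icc 0 T, ‖F t‖ ≤ M) {t : ℝ} (ht : t ∈ Icc 0 T) : |μ t 2| ≤ M * t := by
  have hrow : ∀ s ∈ Ioo 0 T, μ' s 2 + 2 / s * μ s 2 = 2 * μ s 1 / s + F s 2 := fun s hs => by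
    rw [h.ode_apply (Ioo_subset_Ioc_self hs)]
    simp [Lop_eq]
    ring
  have hforce : ∀ s ∈ Ioo 0 T, |μ' s 2 + (2 : ℕ) / s * μ s 2| ≤ 3 * M := fun s hs => by
    have hs' := Ioo_subset_Icc_self hs
    have hF : |F s 2| ≤ M := by
      simpa using (PiLp.norm_apply_le (F s) 2).trans (hM s hs')
    have h1 : |2 * μ s 1 / s| ≤ 2 * M := by
      rw [abs_div, abs_mul, abs_two, abs_of_pos hs.1, div_le_iff₀ hs.1]
      linarith [h.abs_apply_one_le hM hs']
    push_cast
    rw [hrow s hs]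
    linarith [abs_add_le (2 * μ s 1 / s) (F s 2)]
  have := h.abs_apply_le 2 2 hforce ht
  norm_num at this
  linarith

theorem norm_le (h : IsSingularSolution (Lop d₁ d₂) T F μ μ')
    (hM : ∀ t ∈ Icc 0 T, ‖F t‖ ≤ M) {t : ℝ} (ht : t ∈ Icc 0 T) : ‖μ t‖ ≤ 5 * M * t := by
  refine (EuclideanSpace.norm_le_sum_abs _).trans ?_
  rw [Fin.sum_univ_five]
  linarith [h.abs_apply_le_of_row_eq_zero hM (i := 0) (by simp) ht,
    h.abs_apply_le_of_row_eq_zero hM (i := 3) (by simp) ht,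
    h.abs_apply_le_of_row_eq_zero hM (i := 4) (by simp) ht,
    h.abs_apply_one_le hM ht, h.abs_apply_two_le hM ht]

theorem norm_deriv_le (h : IsSingularSolution (Lop d₁ d₂) T F μ μ')
    (hM : ∀ t ∈ Icc 0 T, ‖F t‖ ≤ M) {s : ℝ} (hs : s ∈ Ioc 0 T) : ‖μ' s‖ ≤ 5 * M := by
  have hs' : s ∈ Icc 0 T := Ioc_subset_Icc_self hs
  have hL : ‖Lop d₁ d₂ (μ s)‖ ≤ 4 * M * s := by
    refine (norm_Lop_le d₁ d₂ _).trans ?_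
    linarith [h.add_one_mul_abs_apply_one_le hM hs', h.abs_apply_one_le hM hs',
      h.abs_apply_two_le hM hs']
  calc ‖μ' s‖ ≤ 1 / s * ‖Lop d₁ d₂ (μ s)‖ + ‖F s‖ := by
        rw [h.ode s hs]
        refine (norm_add_le _ _).trans_eq ?_
        rw [norm_smul, Real.norm_of_nonneg (one_div_pos.2 hs.1).le]
    _ ≤ 1 / s * (4 * M * s) + M := by
        gcongr
        · exact (one_div_pos.2 hs.1).le
        · exact hM s hs'
    _ = 5 * M := by
        field_simp [hs.1.ne']
        ring

end Lop

end IsSingularSolution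

theorem singular_linear_C0_C1_bound_general
    (d₁ d₂ : ℕ)
    (tstar : ℝ) (h1 : tstar ≤ 1.5)
    (F μ μ' : ℝ → EuclideanSpace ℝ (Fin 5))
    (hF : ContinuousOn F (Set.Icc 0 tstar))
    (hμc : ContinuousOn μ (Set.Icc 0 tstar)) (hμ0 : μ 0 = 0)
    (hderiv : ∀ t ∈ Set.Ioc 0 tstar, HasDerivWithinAt μ (μ' t) (Set.Icc 0 tstar) t)
    (hode : ∀ t ∈ Set.Ioc 0 tstar, μ' t = (1/t) • Lop d₁ d₂ (μ t) + F t) :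
    ∀ t ∈ Set.Icc (0:ℝ) tstar, ∀ s ∈ Set.Ioc (0:ℝ) tstar,
      ‖μ t‖ + ‖μ' s‖ ≤ 25 * ⨆ r : Set.Icc (0:ℝ) tstar, ‖F r‖ := by
  have h : IsSingularSolution (Lop d₁ d₂) tstar F μ μ' := ⟨hμc, hμ0, hderiv, hode⟩
  set M := ⨆ r : Set.Icc (0:ℝ) tstar, ‖F r‖
  have hM : ∀ r ∈ Icc 0 tstar, ‖F r‖ ≤ M :=
    fun r hr => isCompact_Icc.norm_le_iSup_norm_of_continuousOn hF hr
  intro t ht s hs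
  have hM0 : 0 ≤ M := (norm_nonneg _).trans (hM t ht)
  calc ‖μ t‖ + ‖μ' s‖ ≤ 5 * M * t + 5 * M := add_le_add (h.norm_le hM ht) (h.norm_deriv_le hM hs)
    _ ≤ 5 * M * 1.5 + 5 * M := by gcongr; exact ht.2.trans h1
    _ ≤ 25 * M := by linarith

/-- `C⁰ → C¹` bound for the singular linear solution operator: if
`μ'(t) = (1/t) L μ(t) + F(t)` on `(0, t*]` with `μ(0) = 0`, then
`sup_{[0,t*]} |μ| + sup_{(0,t*]} |μ'| ≤ 25 sup_{[0,t*]} |F|`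
(stated in the equivalent pairwise form `‖μ t‖ + ‖μ' s‖ ≤ 25 sup |F|` for all `t, s`). -/
theorem singular_linear_C0_C1_bound
    (d₁ d₂ : ℕ) (hd₁ : 2 ≤ d₁) (hd₂ : d₂ = 2 ∨ d₂ = 9)
    (tstar : ℝ) (h0 : 0 < tstar) (h1 : tstar ≤ 1.5)
    (F μ μ' : ℝ → EuclideanSpace ℝ (Fin 5))
    (hF : ContinuousOn F (Set.Icc 0 tstar))
    (hμc : ContinuousOn μ (Set.Icc 0 tstar)) (hμ0 : μ 0 = 0)
    (hderiv : ∀ t ∈ Set.Ioc 0 tstar, HasDerivWithinAt μ (μ' t) (Set.Icc 0 tstar) t)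
    (hode : ∀ t ∈ Set.Ioc 0 tstar, μ' t = (1/t) • Lop d₁ d₂ (μ t) + F t) :
    ∀ t ∈ Set.Icc (0:ℝ) tstar, ∀ s ∈ Set.Ioc (0:ℝ) tstar,
      ‖μ t‖ + ‖μ' s‖ ≤ 25 * ⨆ r : Set.Icc (0:ℝ) tstar, ‖F r‖ :=
  singular_linear_C0_C1_bound_general d₁ d₂ tstar h1 F μ μ' hF hμc hμ0 hderiv hode
end
end

section
/- Let d₁, d₂ ≥ 2 be integers, λ ∈ ℝ, and let I ⊆ ℝ be a nonempty open interval. Suppose f₁, f₂ : I → ℝ are smooth and positive and satisfy at least two of the three equations (E1), (E2), (E3) of the Einstein ODE system on all of I. If the first-integral identity (d₁+d₂−1)λ = d₁(d₁−1)/f₁² + d₂(d₂−1)/f₂² − d₁(d₁−1)(f₁')²/f₁² − d₂(d₂−1)(f₂')²/f₂² − 2d₁d₂·f₁'f₂'/(f₁f₂) holds at some t₀ ∈ I, then the remaining third equation also holds on all of I. -/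
noncomputable section

/-- Equation (E1) of the Einstein ODE system: `d₁ f₁''/f₁ + d₂ f₂''/f₂ = −λ`. -/
def EinsteinE1 (d₁ d₂ : ℕ) (lam : ℝ) (f₁ f₂ : ℝ → ℝ) (t : ℝ) : Prop :=
  (d₁ : ℝ) * deriv (deriv f₁) t / f₁ t + (d₂ : ℝ) * deriv (deriv f₂) t / f₂ t = -lam

/-- Equation (E2) of the Einstein ODE system:
`f₁''/f₁ + (d₁−1)(f₁')²/f₁² + d₂ f₁'f₂'/(f₁f₂) − (d₁−1)/f₁² = −λ`. -/
def EinsteinE2 (d₁ d₂ : ℕ) (lam : ℝ) (f₁ f₂ : ℝ → ℝ) (t : ℝ) : Prop :=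
  deriv (deriv f₁) t / f₁ t + ((d₁ : ℝ) - 1) * (deriv f₁ t) ^ 2 / (f₁ t) ^ 2
    + (d₂ : ℝ) * (deriv f₁ t * deriv f₂ t) / (f₁ t * f₂ t)
    - ((d₁ : ℝ) - 1) / (f₁ t) ^ 2 = -lam

/-- Equation (E3) of the Einstein ODE system:
`f₂''/f₂ + (d₂−1)(f₂')²/f₂² + d₁ f₁'f₂'/(f₁f₂) − (d₂−1)/f₂² = −λ`. -/
def EinsteinE3 (d₁ d₂ : ℕ) (lam : ℝ) (f₁ f₂ : ℝ → ℝ) (t : ℝ) : Prop :=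
  deriv (deriv f₂) t / f₂ t + ((d₂ : ℝ) - 1) * (deriv f₂ t) ^ 2 / (f₂ t) ^ 2
    + (d₁ : ℝ) * (deriv f₁ t * deriv f₂ t) / (f₁ t * f₂ t)
    - ((d₂ : ℝ) - 1) / (f₂ t) ^ 2 = -lam

open Set Real



/-- Forward Gronwall-type nullity. -/
lemma zero_forward {G h : ℝ → ℝ} {c b K : ℝ}
    (hG : ∀ s ∈ Icc c b, HasDerivAt G (h s) s)
    (hbound : ∀ s ∈ Icc c b, |h s| ≤ K * |G s|)
    (h0 : G c = 0) : ∀ s ∈ Icc c b, G s = 0 := by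
  intro s hs
  have hcont : ContinuousOn G (Icc c b) :=
    continuousOn_of_forall_continuousAt fun x hx => (hG x hx).continuousAt
  have key := norm_le_gronwallBound_of_norm_deriv_right_le (f := G) (f' := h)
    (δ := 0) (K := K) (ε := 0) (a := c) (b := b) hcont
    (fun x hx => (hG x (Ico_subset_Icc_self hx)).hasDerivWithinAt)
    (by simp [h0])
    (fun x hx => by
      simpa using hbound x (Ico_subset_Icc_self hx))
  have := key s hs
  rw [gronwallBound_ε0_δ0] at this
  have : |G s| ≤ 0 := by simpa using this
  exact abs_eq_zero.mp (le_antisymm this (abs_nonneg _))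

/-- If `G' = a·G` on an ord-connected open set and `G t₀ = 0`, then `G ≡ 0`. -/
lemma zero_of_linear_ode {I : Set ℝ} (hIconn : I.OrdConnected)
    {G a : ℝ → ℝ} (hG : ∀ t ∈ I, HasDerivAt G (a t * G t) t)
    (ha : ContinuousOn a I) {t₀ : ℝ} (ht₀ : t₀ ∈ I) (h0 : G t₀ = 0) :
    ∀ t ∈ I, G t = 0 := by
  intro t ht
  rcases le_total t₀ t with hle | hle
  · have hsub : Icc t₀ t ⊆ I := hIconn.out ht₀ ht
    obtain ⟨K, hK⟩ := isCompact_Icc.exists_bound_of_continuousOn (ha.mono hsub)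
    exact zero_forward (fun s hs => hG s (hsub hs))
      (fun s hs => by
        rw [abs_mul]
        exact mul_le_mul_of_nonneg_right (by simpa using hK s hs) (abs_nonneg _))
      h0 t ⟨hle, le_rfl⟩
  · -- reflect
    have hsub : Icc t t₀ ⊆ I := hIconn.out ht ht₀
    obtain ⟨K, hK⟩ := isCompact_Icc.exists_bound_of_continuousOn (ha.mono hsub)
    set r : ℝ → ℝ := fun s => 2*t₀ - s with hr
    have hmem : ∀ s ∈ Icc t₀ (t₀ + (t₀ - t)), r s ∈ Icc t t₀ := by
      intro s hs
      simp only [hr, mem_Icc] at hs ⊢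
      constructor <;> linarith [hs.1, hs.2]
    have hG' : ∀ s ∈ Icc t₀ (t₀ + (t₀ - t)),
        HasDerivAt (fun s => G (r s)) (-(a (r s) * G (r s))) s := by
      intro s hs
      have hrs : HasDerivAt r (-1) s := by
        simpa using (hasDerivAt_id s).const_sub (2*t₀)
      have := (hG (r s) (hsub (hmem s hs))).comp s hrs
      simpa [mul_comm, Function.comp_def] using this
    have h0' : G (r t₀) = 0 := by
      have : r t₀ = t₀ := by simp [hr]; ring
      rw [this, h0]
    have := zero_forward hG'
      (fun s hs => by
        rw [abs_neg, abs_mul]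
        exact mul_le_mul_of_nonneg_right (by simpa using hK _ (hmem s hs)) (abs_nonneg _))
      h0' (t₀ + (t₀ - t)) ⟨by linarith, le_rfl⟩
    have harg : r (t₀ + (t₀ - t)) = t := by simp [hr]; ring
    rw [harg] at this
    exact this
/-- The value of the first-integral function at `t`. -/
def Gval (d₁ d₂ : ℕ) (lam : ℝ) (f₁ f₂ : ℝ → ℝ) (t : ℝ) : ℝ :=
  (d₁ : ℝ) * ((d₁ : ℝ) - 1) * ((deriv f₁ t) ^ 2 - 1) / (f₁ t) ^ 2
    + (d₂ : ℝ) * ((d₂ : ℝ) - 1) * ((deriv f₂ t) ^ 2 - 1) / (f₂ t) ^ 2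
    + 2 * (d₁ : ℝ) * (d₂ : ℝ) * (deriv f₁ t * deriv f₂ t) / (f₁ t * f₂ t)
    + ((d₁ : ℝ) + (d₂ : ℝ) - 1) * lam

lemma third_of_two (d₁ d₂ : ℕ) (hd₁ : 0 < d₁) (hd₂ : 0 < d₂) (lam : ℝ)
    (f₁ f₂ : ℝ → ℝ) (t : ℝ)
    (hG : Gval d₁ d₂ lam f₁ f₂ t = 0) :
    ((EinsteinE1 d₁ d₂ lam f₁ f₂ t ∧ EinsteinE2 d₁ d₂ lam f₁ f₂ t) →
        EinsteinE3 d₁ d₂ lam f₁ f₂ t)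
    ∧ ((EinsteinE1 d₁ d₂ lam f₁ f₂ t ∧ EinsteinE3 d₁ d₂ lam f₁ f₂ t) →
        EinsteinE2 d₁ d₂ lam f₁ f₂ t)
    ∧ ((EinsteinE2 d₁ d₂ lam f₁ f₂ t ∧ EinsteinE3 d₁ d₂ lam f₁ f₂ t) →
        EinsteinE1 d₁ d₂ lam f₁ f₂ t) := by
  have hd₁' : ((d₁ : ℝ)) ≠ 0 := by positivity
  have hd₂' : ((d₂ : ℝ)) ≠ 0 := by positivity
  unfold Gval at hG
  unfold EinsteinE1 EinsteinE2 EinsteinE3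
  refine ⟨fun ⟨h1, h2⟩ => ?_, fun ⟨h1, h3⟩ => ?_, fun ⟨h2, h3⟩ => ?_⟩
  · have h : (d₂ : ℝ) * ((deriv (deriv f₂) t / f₂ t
        + ((d₂ : ℝ) - 1) * (deriv f₂ t) ^ 2 / (f₂ t) ^ 2
        + (d₁ : ℝ) * (deriv f₁ t * deriv f₂ t) / (f₁ t * f₂ t)
        - ((d₂ : ℝ) - 1) / (f₂ t) ^ 2) - (-lam)) = 0 := by
      linear_combination hG + h1 - (d₁ : ℝ) * h2
    rcases mul_eq_zero.mp h with h' | h'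
    · exact absurd h' hd₂'
    · linarith [h']
  · have h : (d₁ : ℝ) * ((deriv (deriv f₁) t / f₁ t
        + ((d₁ : ℝ) - 1) * (deriv f₁ t) ^ 2 / (f₁ t) ^ 2
        + (d₂ : ℝ) * (deriv f₁ t * deriv f₂ t) / (f₁ t * f₂ t)
        - ((d₁ : ℝ) - 1) / (f₁ t) ^ 2) - (-lam)) = 0 := by
      linear_combination hG + h1 - (d₂ : ℝ) * h3
    rcases mul_eq_zero.mp h with h' | h'
    · exact absurd h' hd₁'
    · linarith [h']
  · linear_combination (d₁ : ℝ) * h2 + (d₂ : ℝ) * h3 - hG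

lemma xpp_of_E2 (d₁ d₂ : ℕ) (lam : ℝ) (f₁ f₂ : ℝ → ℝ) (t : ℝ)
    (hx : f₁ t ≠ 0) (hy : f₂ t ≠ 0) (h2 : EinsteinE2 d₁ d₂ lam f₁ f₂ t) :
    deriv (deriv f₁) t = (-lam - ((d₁ : ℝ) - 1) * (deriv f₁ t) ^ 2 / (f₁ t) ^ 2
      - (d₂ : ℝ) * (deriv f₁ t * deriv f₂ t) / (f₁ t * f₂ t)
      + ((d₁ : ℝ) - 1) / (f₁ t) ^ 2) * f₁ t := by
  unfold EinsteinE2 at h2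
  field_simp at h2 ⊢
  linear_combination h2

lemma ypp_of_E3 (d₁ d₂ : ℕ) (lam : ℝ) (f₁ f₂ : ℝ → ℝ) (t : ℝ)
    (hx : f₁ t ≠ 0) (hy : f₂ t ≠ 0) (h3 : EinsteinE3 d₁ d₂ lam f₁ f₂ t) :
    deriv (deriv f₂) t = (-lam - ((d₂ : ℝ) - 1) * (deriv f₂ t) ^ 2 / (f₂ t) ^ 2
      - (d₁ : ℝ) * (deriv f₁ t * deriv f₂ t) / (f₁ t * f₂ t)
      + ((d₂ : ℝ) - 1) / (f₂ t) ^ 2) * f₂ t := by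
  unfold EinsteinE3 at h3
  field_simp at h3 ⊢
  linear_combination h3

lemma ypp_of_E1 (d₁ d₂ : ℕ) (hd₂ : 0 < d₂) (lam : ℝ) (f₁ f₂ : ℝ → ℝ) (t : ℝ)
    (hx : f₁ t ≠ 0) (hy : f₂ t ≠ 0) (h1 : EinsteinE1 d₁ d₂ lam f₁ f₂ t) :
    deriv (deriv f₂) t = (-lam - (d₁ : ℝ) * deriv (deriv f₁) t / f₁ t) * f₂ t / (d₂ : ℝ) := by
  have hd₂' : ((d₂ : ℝ)) ≠ 0 := by positivity
  unfold EinsteinE1 at h1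
  field_simp at h1 ⊢
  linear_combination h1

lemma xpp_of_E1 (d₁ d₂ : ℕ) (hd₁ : 0 < d₁) (lam : ℝ) (f₁ f₂ : ℝ → ℝ) (t : ℝ)
    (hx : f₁ t ≠ 0) (hy : f₂ t ≠ 0) (h1 : EinsteinE1 d₁ d₂ lam f₁ f₂ t) :
    deriv (deriv f₁) t = (-lam - (d₂ : ℝ) * deriv (deriv f₂) t / f₂ t) * f₁ t / (d₁ : ℝ) := by
  have hd₁' : ((d₁ : ℝ)) ≠ 0 := by positivity
  unfold EinsteinE1 at h1
  field_simp at h1 ⊢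
  linear_combination h1

lemma hasDerivAt_Gval (d₁ d₂ : ℕ) (lam : ℝ) (f₁ f₂ : ℝ → ℝ) (t : ℝ)
    (hx : f₁ t ≠ 0) (hy : f₂ t ≠ 0)
    (hf₁ : HasDerivAt f₁ (deriv f₁ t) t) (hf₂ : HasDerivAt f₂ (deriv f₂ t) t)
    (hdf₁ : HasDerivAt (deriv f₁) (deriv (deriv f₁) t) t)
    (hdf₂ : HasDerivAt (deriv f₂) (deriv (deriv f₂) t) t) :
    HasDerivAt (Gval d₁ d₂ lam f₁ f₂)
      ((d₁ : ℝ) * ((d₁ : ℝ) - 1) * (2 * deriv f₁ t * deriv (deriv f₁) t) / (f₁ t) ^ 2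
        - (d₁ : ℝ) * ((d₁ : ℝ) - 1) * ((deriv f₁ t) ^ 2 - 1) * (2 * deriv f₁ t) / (f₁ t) ^ 3
        + (d₂ : ℝ) * ((d₂ : ℝ) - 1) * (2 * deriv f₂ t * deriv (deriv f₂) t) / (f₂ t) ^ 2
        - (d₂ : ℝ) * ((d₂ : ℝ) - 1) * ((deriv f₂ t) ^ 2 - 1) * (2 * deriv f₂ t) / (f₂ t) ^ 3
        + 2 * (d₁ : ℝ) * (d₂ : ℝ)
          * (deriv (deriv f₁) t * deriv f₂ t + deriv f₁ t * deriv (deriv f₂) t) / (f₁ t * f₂ t)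
        - 2 * (d₁ : ℝ) * (d₂ : ℝ) * (deriv f₁ t * deriv f₂ t)
          * (deriv f₁ t * f₂ t + f₁ t * deriv f₂ t) / (f₁ t * f₂ t) ^ 2) t := by
  have hfun : Gval d₁ d₂ lam f₁ f₂ = fun s =>
      (d₁ : ℝ) * ((d₁ : ℝ) - 1) * ((deriv f₁ s) ^ 2 - 1) / (f₁ s) ^ 2
        + (d₂ : ℝ) * ((d₂ : ℝ) - 1) * ((deriv f₂ s) ^ 2 - 1) / (f₂ s) ^ 2
        + 2 * (d₁ : ℝ) * (d₂ : ℝ) * (deriv f₁ s * deriv f₂ s) / (f₁ s * f₂ s)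
        + ((d₁ : ℝ) + (d₂ : ℝ) - 1) * lam := rfl
  rw [hfun]
  have H := (((((hdf₁.pow 2).sub_const 1).const_mul ((d₁ : ℝ) * ((d₁ : ℝ) - 1))).div
      (hf₁.pow 2) (pow_ne_zero 2 hx)).add
    ((((hdf₂.pow 2).sub_const 1).const_mul ((d₂ : ℝ) * ((d₂ : ℝ) - 1))).div
      (hf₂.pow 2) (pow_ne_zero 2 hy))).add
    (((hdf₁.mul hdf₂).const_mul (2 * (d₁ : ℝ) * (d₂ : ℝ))).div
      (hf₁.mul hf₂) (mul_ne_zero hx hy)) |>.add_const (((d₁ : ℝ) + (d₂ : ℝ) - 1) * lam)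
  refine H.congr_deriv ?_
  norm_num only [Pi.pow_apply, Pi.mul_apply]
  field_simp
  ring

lemma deriv_G_12 (d₁ d₂ : ℕ) (hd₂ : 0 < d₂) (lam : ℝ) (f₁ f₂ : ℝ → ℝ) (t : ℝ)
    (hx : f₁ t ≠ 0) (hy : f₂ t ≠ 0)
    (hf₁ : HasDerivAt f₁ (deriv f₁ t) t) (hf₂ : HasDerivAt f₂ (deriv f₂ t) t)
    (hdf₁ : HasDerivAt (deriv f₁) (deriv (deriv f₁) t) t)
    (hdf₂ : HasDerivAt (deriv f₂) (deriv (deriv f₂) t) t)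
    (h1 : EinsteinE1 d₁ d₂ lam f₁ f₂ t) (h2 : EinsteinE2 d₁ d₂ lam f₁ f₂ t) :
    HasDerivAt (Gval d₁ d₂ lam f₁ f₂)
      ((-2 * (deriv f₂ t / f₂ t)) * Gval d₁ d₂ lam f₁ f₂ t) t := by
  have hd₂' : ((d₂ : ℝ)) ≠ 0 := by positivity
  have hxpp := xpp_of_E2 d₁ d₂ lam f₁ f₂ t hx hy h2
  have hypp := ypp_of_E1 d₁ d₂ hd₂ lam f₁ f₂ t hx hy h1
  convert hasDerivAt_Gval d₁ d₂ lam f₁ f₂ t hx hy hf₁ hf₂ hdf₁ hdf₂ using 1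
  rw [hypp, hxpp]
  simp only [Gval]
  field_simp
  ring

lemma deriv_G_13 (d₁ d₂ : ℕ) (hd₁ : 0 < d₁) (lam : ℝ) (f₁ f₂ : ℝ → ℝ) (t : ℝ)
    (hx : f₁ t ≠ 0) (hy : f₂ t ≠ 0)
    (hf₁ : HasDerivAt f₁ (deriv f₁ t) t) (hf₂ : HasDerivAt f₂ (deriv f₂ t) t)
    (hdf₁ : HasDerivAt (deriv f₁) (deriv (deriv f₁) t) t)
    (hdf₂ : HasDerivAt (deriv f₂) (deriv (deriv f₂) t) t)
    (h1 : EinsteinE1 d₁ d₂ lam f₁ f₂ t) (h3 : EinsteinE3 d₁ d₂ lam f₁ f₂ t) :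
    HasDerivAt (Gval d₁ d₂ lam f₁ f₂)
      ((-2 * (deriv f₁ t / f₁ t)) * Gval d₁ d₂ lam f₁ f₂ t) t := by
  have hd₁' : ((d₁ : ℝ)) ≠ 0 := by positivity
  have hypp := ypp_of_E3 d₁ d₂ lam f₁ f₂ t hx hy h3
  have hxpp := xpp_of_E1 d₁ d₂ hd₁ lam f₁ f₂ t hx hy h1
  convert hasDerivAt_Gval d₁ d₂ lam f₁ f₂ t hx hy hf₁ hf₂ hdf₁ hdf₂ using 1
  rw [hxpp, hypp]
  simp only [Gval]
  field_simp
  ring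

lemma deriv_G_23 (d₁ d₂ : ℕ) (lam : ℝ) (f₁ f₂ : ℝ → ℝ) (t : ℝ)
    (hx : f₁ t ≠ 0) (hy : f₂ t ≠ 0)
    (hf₁ : HasDerivAt f₁ (deriv f₁ t) t) (hf₂ : HasDerivAt f₂ (deriv f₂ t) t)
    (hdf₁ : HasDerivAt (deriv f₁) (deriv (deriv f₁) t) t)
    (hdf₂ : HasDerivAt (deriv f₂) (deriv (deriv f₂) t) t)
    (h2 : EinsteinE2 d₁ d₂ lam f₁ f₂ t) (h3 : EinsteinE3 d₁ d₂ lam f₁ f₂ t) :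
    HasDerivAt (Gval d₁ d₂ lam f₁ f₂)
      ((-2 * ((d₁ : ℝ) * (deriv f₁ t / f₁ t) + (d₂ : ℝ) * (deriv f₂ t / f₂ t)))
        * Gval d₁ d₂ lam f₁ f₂ t) t := by
  have hxpp := xpp_of_E2 d₁ d₂ lam f₁ f₂ t hx hy h2
  have hypp := ypp_of_E3 d₁ d₂ lam f₁ f₂ t hx hy h3
  convert hasDerivAt_Gval d₁ d₂ lam f₁ f₂ t hx hy hf₁ hf₂ hdf₁ hdf₂ using 1
  rw [hxpp, hypp]
  simp only [Gval]
  field_simp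
  ring

/-- If smooth positive `f₁, f₂` on a nonempty open interval `I` satisfy at least two of the
three Einstein ODEs on `I`, and the first-integral identity holds at some `t₀ ∈ I`, then the
remaining third equation also holds on all of `I` (i.e. all three equations hold on `I`). -/
theorem einstein_two_eqs_and_first_integral_imply_third
    (d₁ d₂ : ℕ) (hd₁ : 2 ≤ d₁) (hd₂ : 2 ≤ d₂) (lam : ℝ)
    (I : Set ℝ) (hIopen : IsOpen I) (hIconn : I.OrdConnected) (hInonempty : I.Nonempty)
    (f₁ f₂ : ℝ → ℝ)
    (hsmooth₁ : ContDiffOn ℝ (⊤ : ℕ∞) f₁ I) (hsmooth₂ : ContDiffOn ℝ (⊤ : ℕ∞) f₂ I)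
    (hpos₁ : ∀ t ∈ I, 0 < f₁ t) (hpos₂ : ∀ t ∈ I, 0 < f₂ t)
    (htwo : (∀ t ∈ I, EinsteinE1 d₁ d₂ lam f₁ f₂ t ∧ EinsteinE2 d₁ d₂ lam f₁ f₂ t)
      ∨ (∀ t ∈ I, EinsteinE1 d₁ d₂ lam f₁ f₂ t ∧ EinsteinE3 d₁ d₂ lam f₁ f₂ t)
      ∨ (∀ t ∈ I, EinsteinE2 d₁ d₂ lam f₁ f₂ t ∧ EinsteinE3 d₁ d₂ lam f₁ f₂ t))
    (t₀ : ℝ) (ht₀ : t₀ ∈ I)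
    (hfirst : ((d₁ : ℝ) + (d₂ : ℝ) - 1) * lam
      = (d₁ : ℝ) * ((d₁ : ℝ) - 1) / (f₁ t₀) ^ 2 + (d₂ : ℝ) * ((d₂ : ℝ) - 1) / (f₂ t₀) ^ 2
        - (d₁ : ℝ) * ((d₁ : ℝ) - 1) * (deriv f₁ t₀) ^ 2 / (f₁ t₀) ^ 2
        - (d₂ : ℝ) * ((d₂ : ℝ) - 1) * (deriv f₂ t₀) ^ 2 / (f₂ t₀) ^ 2
        - 2 * (d₁ : ℝ) * (d₂ : ℝ) * (deriv f₁ t₀ * deriv f₂ t₀) / (f₁ t₀ * f₂ t₀)) :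
    ∀ t ∈ I, EinsteinE1 d₁ d₂ lam f₁ f₂ t ∧ EinsteinE2 d₁ d₂ lam f₁ f₂ t
      ∧ EinsteinE3 d₁ d₂ lam f₁ f₂ t := by
  have hd₁0 : 0 < d₁ := by omega
  have hd₂0 : 0 < d₂ := by omega
  have hne₁ : ∀ t ∈ I, f₁ t ≠ 0 := fun t ht => (hpos₁ t ht).ne'
  have hne₂ : ∀ t ∈ I, f₂ t ≠ 0 := fun t ht => (hpos₂ t ht).ne'
  have hdC₁ : ContDiffOn ℝ (⊤ : ℕ∞) (deriv f₁) I := hsmooth₁.deriv_of_isOpen hIopen (by simp)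
  have hdC₂ : ContDiffOn ℝ (⊤ : ℕ∞) (deriv f₂) I := hsmooth₂.deriv_of_isOpen hIopen (by simp)
  have hdiff₁ : ∀ t ∈ I, HasDerivAt f₁ (deriv f₁ t) t := fun t ht =>
    (((hsmooth₁.differentiableOn (by simp)).differentiableAt (hIopen.mem_nhds ht))).hasDerivAt
  have hdiff₂ : ∀ t ∈ I, HasDerivAt f₂ (deriv f₂ t) t := fun t ht =>
    (((hsmooth₂.differentiableOn (by simp)).differentiableAt (hIopen.mem_nhds ht))).hasDerivAt
  have hddiff₁ : ∀ t ∈ I, HasDerivAt (deriv f₁) (deriv (deriv f₁) t) t := fun t ht =>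
    (((hdC₁.differentiableOn (by simp)).differentiableAt (hIopen.mem_nhds ht))).hasDerivAt
  have hddiff₂ : ∀ t ∈ I, HasDerivAt (deriv f₂) (deriv (deriv f₂) t) t := fun t ht =>
    (((hdC₂.differentiableOn (by simp)).differentiableAt (hIopen.mem_nhds ht))).hasDerivAt
  have hG0 : Gval d₁ d₂ lam f₁ f₂ t₀ = 0 := by
    simp only [Gval]
    linear_combination hfirst
  rcases htwo with h | h | h
  · -- E1 ∧ E2 hold
    have hder : ∀ t ∈ I, HasDerivAt (Gval d₁ d₂ lam f₁ f₂)
        ((fun s => -2 * (deriv f₂ s / f₂ s)) t * Gval d₁ d₂ lam f₁ f₂ t) t := fun t ht =>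
      deriv_G_12 d₁ d₂ hd₂0 lam f₁ f₂ t (hne₁ t ht) (hne₂ t ht) (hdiff₁ t ht) (hdiff₂ t ht)
        (hddiff₁ t ht) (hddiff₂ t ht) (h t ht).1 (h t ht).2
    have hcont : ContinuousOn (fun s => -2 * (deriv f₂ s / f₂ s)) I :=
      continuousOn_const.mul (hdC₂.continuousOn.div hsmooth₂.continuousOn hne₂)
    have key := zero_of_linear_ode hIconn hder hcont ht₀ hG0
    intro t ht
    exact ⟨(h t ht).1, (h t ht).2,
      (third_of_two d₁ d₂ hd₁0 hd₂0 lam f₁ f₂ t (key t ht)).1 ⟨(h t ht).1, (h t ht).2⟩⟩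
  · -- E1 ∧ E3 hold
    have hder : ∀ t ∈ I, HasDerivAt (Gval d₁ d₂ lam f₁ f₂)
        ((fun s => -2 * (deriv f₁ s / f₁ s)) t * Gval d₁ d₂ lam f₁ f₂ t) t := fun t ht =>
      deriv_G_13 d₁ d₂ hd₁0 lam f₁ f₂ t (hne₁ t ht) (hne₂ t ht) (hdiff₁ t ht) (hdiff₂ t ht)
        (hddiff₁ t ht) (hddiff₂ t ht) (h t ht).1 (h t ht).2
    have hcont : ContinuousOn (fun s => -2 * (deriv f₁ s / f₁ s)) I :=
      continuousOn_const.mul (hdC₁.continuousOn.div hsmooth₁.continuousOn hne₁)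
    have key := zero_of_linear_ode hIconn hder hcont ht₀ hG0
    intro t ht
    exact ⟨(h t ht).1,
      (third_of_two d₁ d₂ hd₁0 hd₂0 lam f₁ f₂ t (key t ht)).2.1 ⟨(h t ht).1, (h t ht).2⟩,
      (h t ht).2⟩
  · -- E2 ∧ E3 hold
    have hder : ∀ t ∈ I, HasDerivAt (Gval d₁ d₂ lam f₁ f₂)
        ((fun s => -2 * ((d₁ : ℝ) * (deriv f₁ s / f₁ s) + (d₂ : ℝ) * (deriv f₂ s / f₂ s))) t
          * Gval d₁ d₂ lam f₁ f₂ t) t := fun t ht =>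
      deriv_G_23 d₁ d₂ lam f₁ f₂ t (hne₁ t ht) (hne₂ t ht) (hdiff₁ t ht) (hdiff₂ t ht)
        (hddiff₁ t ht) (hddiff₂ t ht) (h t ht).1 (h t ht).2
    have hcont : ContinuousOn
        (fun s => -2 * ((d₁ : ℝ) * (deriv f₁ s / f₁ s) + (d₂ : ℝ) * (deriv f₂ s / f₂ s))) I :=
      continuousOn_const.mul
        ((continuousOn_const.mul (hdC₁.continuousOn.div hsmooth₁.continuousOn hne₁)).add
          (continuousOn_const.mul (hdC₂.continuousOn.div hsmooth₂.continuousOn hne₂)))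
    have key := zero_of_linear_ode hIconn hder hcont ht₀ hG0
    intro t ht
    exact ⟨(third_of_two d₁ d₂ hd₁0 hd₂0 lam f₁ f₂ t (key t ht)).2.2 ⟨(h t ht).1, (h t ht).2⟩,
      (h t ht).1, (h t ht).2⟩
end
end

section
/- Let d₁, d₂ ≥ 2 be integers, λ > 0, α > 0, ε > 0. Suppose f₁, f₂ : (−ε, ε] → ℝ are smooth, f₁ is even and f₂ is odd, f₁ > 0 on [0, ε], f₂ > 0 on (0, ε], f₁(0) = √(d₁−1)/α, f₂'(0) = 1, and f₁, f₂ satisfy all three equations of the Einstein ODE system on (0, ε]. Define η : (0, ε] → ℝ⁵ by η₁(t) = √(d₁−1)/f₁(t) − α, η₂(t) = d₁f₁'(t)/f₁(t), η₃(t) = d₁f₁'(t)/f₁(t) + d₂f₂'(t)/f₂(t) − d₂/t, η₄(t) = α, η₅(t) = √λ. Then η extends to a smooth function on [0, ε] with η(0) = (0, 0, 0, α, √λ), and η satisfies η'(t) = (1/t)·L_{d₁d₂}·η(t) + B_{d₁d₂}(η(t), η(t)) for all t ∈ (0, ε]. -/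
noncomputable section

/-- The symmetric bilinear map `B_{d₁d₂} : ℝ⁵ × ℝ⁵ → ℝ⁵` (coordinates indexed `0,…,4`,
corresponding to the paper's indices `1,…,5`). -/
def Bmap (d₁ d₂ : ℕ) (x y : EuclideanSpace ℝ (Fin 5)) : EuclideanSpace ℝ (Fin 5) :=
  WithLp.toLp 2 ![-(1 / (2 * (d₁:ℝ))) * (x 1 * y 3 + x 3 * y 1 + x 0 * y 1 + x 1 * y 0),
    -(1/2 : ℝ) * (x 1 * y 2 + x 2 * y 1)
      + (d₁:ℝ) * (x 0 * y 0 + x 3 * y 3 + x 0 * y 3 + x 3 * y 0) - (d₁:ℝ) * (x 4 * y 4),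
    -(1 / (d₂:ℝ)) * (x 2 * y 2) + (1 / (d₂:ℝ)) * (x 1 * y 2 + x 2 * y 1)
      - (1/(d₁:ℝ) + 1/(d₂:ℝ)) * (x 1 * y 1) - x 4 * y 4,
    0, 0]

/-- Derivative within the half-open interval `(−ε, ε]`. -/
def dIoc (ε : ℝ) (f : ℝ → ℝ) : ℝ → ℝ :=
  derivWithin f (Set.Ioc (-ε) ε)

/-- The change of variables `η` associated to a solution `(f₁, f₂)` of the Einstein ODE
system:  `η₁ = √(d₁−1)/f₁ − α`, `η₂ = d₁f₁'/f₁`, `η₃ = d₁f₁'/f₁ + d₂f₂'/f₂ − d₂/t`,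
`η₄ = α`, `η₅ = √λ`. -/
def etaOf (d₁ d₂ : ℕ) (α lam ε : ℝ) (f₁ f₂ : ℝ → ℝ) (t : ℝ) :
    EuclideanSpace ℝ (Fin 5) :=
  WithLp.toLp 2 ![Real.sqrt ((d₁ : ℝ) - 1) / f₁ t - α,
    (d₁ : ℝ) * dIoc ε f₁ t / f₁ t,
    (d₁ : ℝ) * dIoc ε f₁ t / f₁ t + (d₂ : ℝ) * dIoc ε f₂ t / f₂ t - (d₂ : ℝ) / t,
    α, Real.sqrt lam]

/-- auxiliary: derivative at 0 of a locally even function vanishes. -/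
lemma aux_deriv_even_zero {g : ℝ → ℝ} (h : ∀ᶠ t in nhds (0:ℝ), g (-t) = g t) :
    deriv g 0 = 0 := by
  have h1 : deriv (fun t => g (-t)) 0 = deriv g 0 := Filter.EventuallyEq.deriv_eq h
  rw [deriv_comp_neg] at h1
  simp only [neg_zero] at h1
  linarith

lemma aux_J_hasDerivAt {r : ℝ} (k : ℕ) {g : ℝ → ℝ}
    (hg : ContDiffOn ℝ (⊤ : ℕ∞) g (Set.Ioo (-r) r)) {x : ℝ} (hx : x ∈ Set.Ioo (-r) r) :
    HasDerivAt (fun y => ∫ s in (0:ℝ)..1, s ^ k * g (s * y))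
      (∫ s in (0:ℝ)..1, s ^ (k+1) * deriv g (s * x)) x := by
  have hx' : |x| < r := abs_lt.2 hx
  set δ := (r - |x|) / 2 with hδ
  have hδ0 : 0 < δ := by rw [hδ]; linarith
  have hρ : |x| + δ < r := by rw [hδ]; linarith
  have hgd : ContDiffOn ℝ (⊤ : ℕ∞) (deriv g) (Set.Ioo (-r) r) :=
    hg.deriv_of_isOpen isOpen_Ioo (by simp)
  have hK : Set.Icc (-(|x|+δ)) (|x|+δ) ⊆ Set.Ioo (-r) r :=
    fun y hy => ⟨by linarith [hy.1], by linarith [hy.2]⟩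
  obtain ⟨C, hC⟩ := (isCompact_Icc (a := -(|x|+δ)) (b := |x|+δ)).exists_bound_of_continuousOn
    ((hgd.continuousOn).mono hK)
  have hmem : ∀ s ∈ Set.Icc (0:ℝ) 1, ∀ y ∈ Metric.ball x δ,
      s * y ∈ Set.Icc (-(|x|+δ)) (|x|+δ) := by
    intro s hs y hy
    rw [Metric.mem_ball, Real.dist_eq] at hy
    have h1 : |s * y| ≤ |x| + δ := by
      rw [abs_mul, abs_of_nonneg hs.1]
      have : |y| ≤ |x| + δ := by have := abs_sub_abs_le_abs_sub y x; linarith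
      nlinarith [abs_nonneg y, hs.2]
    exact abs_le.1 h1
  have hcont : ∀ y ∈ Metric.ball x δ,
      ContinuousOn (fun s => s ^ k * g (s * y)) (Set.Icc 0 1) := by
    intro y hy
    exact (continuousOn_id.pow k).mul (hg.continuousOn.comp (continuousOn_id.mul continuousOn_const)
      (fun s hs => hK (hmem s hs y hy)))
  have hxb : x ∈ Metric.ball x δ := Metric.mem_ball_self hδ0
  have hcont' : ContinuousOn (fun s => s ^ (k+1) * deriv g (s * x)) (Set.Icc 0 1) :=
    (continuousOn_id.pow (k+1)).mul (hgd.continuousOn.comp (continuousOn_id.mul continuousOn_const)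
      (fun s hs => hK (hmem s hs x hxb)))
  have key := intervalIntegral.hasDerivAt_integral_of_dominated_loc_of_deriv_le
    (μ := MeasureTheory.volume) (a := 0) (b := 1)
    (F := fun y s => s ^ k * g (s * y)) (F' := fun y s => s ^ (k+1) * deriv g (s * y)) (x₀ := x)
    (bound := fun _ => C) (Metric.ball_mem_nhds x hδ0) ?_ ?_ ?_ ?_ intervalIntegrable_const ?_
  · exact key.2
  · filter_upwards [Metric.ball_mem_nhds x hδ0] with y hy
    rw [Set.uIoc_of_le zero_le_one]
    exact ((hcont y hy).mono Set.Ioc_subset_Icc_self).aestronglyMeasurable measurableSet_Ioc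
  · exact (hcont x hxb).intervalIntegrable_of_Icc zero_le_one
  · rw [Set.uIoc_of_le zero_le_one]
    exact (hcont'.mono Set.Ioc_subset_Icc_self).aestronglyMeasurable measurableSet_Ioc
  · refine Filter.Eventually.of_forall fun s hs y hy => ?_
    rw [Set.uIoc_of_le zero_le_one] at hs
    rw [norm_mul, norm_pow, Real.norm_eq_abs s, abs_of_pos hs.1]
    have h2 := hC _ (hmem s (Set.Ioc_subset_Icc_self hs) y hy)
    have h1 : s ^ (k+1) ≤ 1 := pow_le_one₀ hs.1.le hs.2
    nlinarith [norm_nonneg (deriv g (s * y)), pow_nonneg hs.1.le (k+1)]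
  · refine Filter.Eventually.of_forall fun s hs y hy => ?_
    rw [Set.uIoc_of_le zero_le_one] at hs
    have hsy : s * y ∈ Set.Ioo (-r) r := hK (hmem s (Set.Ioc_subset_Icc_self hs) y hy)
    have hd : HasDerivAt g (deriv g (s * y)) (s * y) :=
      ((hg.differentiableOn (by simp) _ hsy).differentiableAt
        (isOpen_Ioo.mem_nhds hsy)).hasDerivAt
    have := (hd.comp y ((hasDerivAt_id y).const_mul s)).const_mul (s ^ k)
    exact this.congr_deriv (by ring)

lemma aux_J_contDiffOn {r : ℝ} (n : ℕ) : ∀ (k : ℕ) (g : ℝ → ℝ),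
    ContDiffOn ℝ (⊤ : ℕ∞) g (Set.Ioo (-r) r) →
    ContDiffOn ℝ n (fun y => ∫ s in (0:ℝ)..1, s ^ k * g (s * y)) (Set.Ioo (-r) r) := by
  induction n with
  | zero =>
    intro k g hg
    exact contDiffOn_zero.2 (fun y hy => (aux_J_hasDerivAt k hg hy).continuousAt.continuousWithinAt)
  | succ n ih =>
    intro k g hg
    have hgd : ContDiffOn ℝ (⊤ : ℕ∞) (deriv g) (Set.Ioo (-r) r) :=
      hg.deriv_of_isOpen isOpen_Ioo (by simp)
    rw [Nat.cast_succ, contDiffOn_succ_iff_deriv_of_isOpen isOpen_Ioo]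
    refine ⟨fun y hy => (aux_J_hasDerivAt k hg hy).differentiableAt.differentiableWithinAt,
      by simp, ?_⟩
    exact (ih (k+1) (deriv g) hgd).congr (fun y hy => (aux_J_hasDerivAt k hg hy).deriv)

lemma aux_contDiffOn_dslope {r : ℝ} {f : ℝ → ℝ} (hf : ContDiffOn ℝ (⊤ : ℕ∞) f (Set.Ioo (-r) r)) :
    ContDiffOn ℝ (⊤ : ℕ∞) (dslope f 0) (Set.Ioo (-r) r) := by
  have hfd : ContDiffOn ℝ (⊤ : ℕ∞) (deriv f) (Set.Ioo (-r) r) :=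
    hf.deriv_of_isOpen isOpen_Ioo (by simp)
  have hJ : ContDiffOn ℝ (⊤ : ℕ∞) (fun y => ∫ s in (0:ℝ)..1, s ^ 0 * deriv f (s * y))
      (Set.Ioo (-r) r) :=
    contDiffOn_infty.2 fun n => aux_J_contDiffOn n 0 (deriv f) hfd
  refine hJ.congr fun y hy => ?_
  have hd : ∀ z ∈ Set.Ioo (-r) r, HasDerivAt f (deriv f z) z := fun z hz =>
    ((hf.differentiableOn (by simp) z hz).differentiableAt (isOpen_Ioo.mem_nhds hz)).hasDerivAt
  simp only [pow_zero, one_mul]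
  rcases eq_or_ne y 0 with rfl | hy0
  · simp [dslope_same]
  · have h0 : (0:ℝ) ∈ Set.Ioo (-r) r := ⟨by linarith [hy.1, hy.2], by linarith [hy.1, hy.2]⟩
    have hsub : Set.uIcc 0 y ⊆ Set.Ioo (-r) r := Set.ordConnected_Ioo.uIcc_subset h0 hy
    rw [dslope_of_ne f hy0, slope, vsub_eq_sub, smul_eq_mul, sub_zero,
      intervalIntegral.integral_comp_mul_right (fun z => deriv f z) hy0]
    simp only [zero_mul, one_mul, smul_eq_mul]
    rw [intervalIntegral.integral_eq_sub_of_hasDerivAt (f := f) (fun z hz => hd z (hsub hz))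
      ((hfd.continuousOn.mono hsub).intervalIntegrable)]

lemma aux_hasDerivWithinAt_euclidean {f : ℝ → EuclideanSpace ℝ (Fin 5)}
    {v : EuclideanSpace ℝ (Fin 5)} {s : Set ℝ} {x : ℝ}
    (h : ∀ i, HasDerivWithinAt (fun t => f t i) (v i) s x) :
    HasDerivWithinAt f v s x := by
  rw [hasDerivWithinAt_iff_hasFDerivWithinAt]
  apply hasFDerivWithinAt_euclidean.2
  intro i
  refine (h i).hasFDerivWithinAt.congr_fderiv ?_
  ext
  simp

set_option maxHeartbeats 2000000 in
/-- From a smooth solution of the Einstein ODE system with the `t = 0` smoothness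
conditions, the associated `η` extends smoothly to `[0, ε]` with `η(0) = (0,0,0,α,√λ)` and
satisfies `η' = (1/t) L_{d₁d₂} η + B_{d₁d₂}(η, η)` on `(0, ε]`. -/
theorem eta_of_einstein_solution
    (d₁ d₂ : ℕ) (hd₁ : 2 ≤ d₁) (hd₂ : 2 ≤ d₂) (lam α ε : ℝ)
    (hlam : 0 < lam) (hα : 0 < α) (hε : 0 < ε)
    (f₁ f₂ : ℝ → ℝ)
    (hsmooth₁ : ContDiffOn ℝ (⊤ : ℕ∞) f₁ (Set.Ioc (-ε) ε))
    (hsmooth₂ : ContDiffOn ℝ (⊤ : ℕ∞) f₂ (Set.Ioc (-ε) ε))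
    (heven : ∀ t ∈ Set.Ioo (-ε) ε, f₁ (-t) = f₁ t)
    (hodd : ∀ t ∈ Set.Ioo (-ε) ε, f₂ (-t) = -f₂ t)
    (hpos₁ : ∀ t ∈ Set.Icc 0 ε, 0 < f₁ t)
    (hpos₂ : ∀ t ∈ Set.Ioc 0 ε, 0 < f₂ t)
    (hic₁ : f₁ 0 = Real.sqrt ((d₁ : ℝ) - 1) / α)
    (hic₂ : dIoc ε f₂ 0 = 1)
    (hE1 : ∀ t ∈ Set.Ioc 0 ε,
      (d₁ : ℝ) * dIoc ε (dIoc ε f₁) t / f₁ t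
        + (d₂ : ℝ) * dIoc ε (dIoc ε f₂) t / f₂ t = -lam)
    (hE2 : ∀ t ∈ Set.Ioc 0 ε,
      dIoc ε (dIoc ε f₁) t / f₁ t + ((d₁ : ℝ) - 1) * (dIoc ε f₁ t) ^ 2 / (f₁ t) ^ 2
        + (d₂ : ℝ) * (dIoc ε f₁ t * dIoc ε f₂ t) / (f₁ t * f₂ t)
        - ((d₁ : ℝ) - 1) / (f₁ t) ^ 2 = -lam)
    (hE3 : ∀ t ∈ Set.Ioc 0 ε,
      dIoc ε (dIoc ε f₂) t / f₂ t + ((d₂ : ℝ) - 1) * (dIoc ε f₂ t) ^ 2 / (f₂ t) ^ 2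
        + (d₁ : ℝ) * (dIoc ε f₁ t * dIoc ε f₂ t) / (f₁ t * f₂ t)
        - ((d₂ : ℝ) - 1) / (f₂ t) ^ 2 = -lam) :
    ∃ ηe : ℝ → EuclideanSpace ℝ (Fin 5),
      ContDiffOn ℝ (⊤ : ℕ∞) ηe (Set.Icc 0 ε) ∧
      (∀ t ∈ Set.Ioc 0 ε, ηe t = etaOf d₁ d₂ α lam ε f₁ f₂ t) ∧
      ηe 0 = ![0, 0, 0, α, Real.sqrt lam] ∧
      (∀ t ∈ Set.Ioc 0 ε,
        HasDerivWithinAt ηe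
          ((1/t) • Lop d₁ d₂ (ηe t) + Bmap d₁ d₂ (ηe t) (ηe t)) (Set.Icc 0 ε) t) := by
  have hd₁R : (2:ℝ) ≤ (d₁:ℝ) := by exact_mod_cast hd₁
  have hd₂R : (2:ℝ) ≤ (d₂:ℝ) := by exact_mod_cast hd₂
  have hd₁0 : (d₁:ℝ) ≠ 0 := by linarith
  have hd₂0 : (d₂:ℝ) ≠ 0 := by linarith
  have hεS : Set.Icc (0:ℝ) ε ⊆ Set.Ioc (-ε) ε :=
    fun x hx => ⟨lt_of_lt_of_le (by linarith) hx.1, hx.2⟩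
  have hUD : UniqueDiffOn ℝ (Set.Ioc (-ε) ε) := uniqueDiffOn_Ioc _ _
  have h0oo : (0:ℝ) ∈ Set.Ioo (-ε) ε := ⟨by linarith, hε⟩
  have hmemN : ∀ t ∈ Set.Ioo (-ε) ε, Set.Ioc (-ε) ε ∈ nhds t := fun t ht =>
    Filter.mem_of_superset (isOpen_Ioo.mem_nhds ht) Set.Ioo_subset_Ioc_self
  have h0S : Set.Ioc (-ε) ε ∈ nhds (0:ℝ) := hmemN 0 h0oo
  -- derivatives are smooth
  have hs₁' : ContDiffOn ℝ (⊤ : ℕ∞) (dIoc ε f₁) (Set.Ioc (-ε) ε) := hsmooth₁.derivWithin hUD (by simp)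
  have hs₂' : ContDiffOn ℝ (⊤ : ℕ∞) (dIoc ε f₂) (Set.Ioc (-ε) ε) := hsmooth₂.derivWithin hUD (by simp)
  -- dIoc equals deriv on the interior
  have hdI : ∀ (g : ℝ → ℝ), ∀ t ∈ Set.Ioo (-ε) ε, dIoc ε g t = deriv g t := fun g t ht =>
    derivWithin_of_mem_nhds (hmemN t ht)
  -- oddness consequences
  have hf₂0 : f₂ 0 = 0 := by
    have := hodd 0 h0oo; simp only [neg_zero] at this; linarith
  have hd₂even : ∀ t ∈ Set.Ioo (-ε) ε, deriv f₂ (-t) = deriv f₂ t := by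
    intro t ht
    have heq : (fun u => f₂ (-u)) =ᶠ[nhds t] (fun u => -f₂ u) := by
      filter_upwards [isOpen_Ioo.mem_nhds ht] with u hu using hodd u hu
    have h1 := heq.deriv_eq
    rw [deriv_comp_neg] at h1
    rw [deriv.fun_neg] at h1
    linarith
  have hf₁d0 : deriv f₁ 0 = 0 := by
    apply aux_deriv_even_zero
    filter_upwards [isOpen_Ioo.mem_nhds h0oo] with u hu using heven u hu
  have hf₂d0 : deriv f₂ 0 = 1 := by
    rw [← derivWithin_of_mem_nhds h0S]; exact hic₂
  -- the function N and its dslope tower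
  set N : ℝ → ℝ := fun t => t * dIoc ε f₂ t - f₂ t with hNdef
  have hNS : ContDiffOn ℝ (⊤ : ℕ∞) N (Set.Ioc (-ε) ε) := (contDiffOn_id.mul hs₂').sub hsmooth₂
  have hN0 : N 0 = 0 := by simp [hNdef, hf₂0]
  have hanN : ContDiffOn ℝ (⊤ : ℕ∞) N (Set.Ioo (-ε) ε) := hNS.mono Set.Ioo_subset_Ioc_self
  have hanf₂ : ContDiffOn ℝ (⊤ : ℕ∞) f₂ (Set.Ioo (-ε) ε) :=
    hsmooth₂.mono Set.Ioo_subset_Ioc_self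
  set M : ℝ → ℝ := dslope N 0 with hMdef
  set gN : ℝ → ℝ := dslope M 0 with hgNdef
  set gD : ℝ → ℝ := dslope f₂ 0 with hgDdef
  have hanM : ContDiffOn ℝ (⊤ : ℕ∞) M (Set.Ioo (-ε) ε) := aux_contDiffOn_dslope hanN
  have hangN : ContDiffOn ℝ (⊤ : ℕ∞) gN (Set.Ioo (-ε) ε) := aux_contDiffOn_dslope hanM
  have hangD : ContDiffOn ℝ (⊤ : ℕ∞) gD (Set.Ioo (-ε) ε) := aux_contDiffOn_dslope hanf₂
  have hgD0 : gD 0 = 1 := by rw [hgDdef, dslope_same]; exact hf₂d0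
  -- deriv N 0 = 0
  have hdiff₂' : DifferentiableAt ℝ (dIoc ε f₂) 0 :=
    (((hs₂' 0 (hεS ⟨le_refl 0, hε.le⟩)).contDiffAt h0S).differentiableAt (by simp))
  have hdiff₂ : DifferentiableAt ℝ f₂ 0 :=
    (((hsmooth₂ 0 (hεS ⟨le_refl 0, hε.le⟩)).contDiffAt h0S).differentiableAt (by simp))
  have hN' : HasDerivAt N (1 * dIoc ε f₂ 0 + 0 * deriv (dIoc ε f₂) 0 - deriv f₂ 0) 0 :=
    ((hasDerivAt_id 0).mul hdiff₂'.hasDerivAt).sub hdiff₂.hasDerivAt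
  have hM0 : M 0 = 0 := by
    rw [hMdef, dslope_same, hN'.deriv, hic₂, hf₂d0]; ring
  -- evenness of M near 0, hence gN 0 = 0
  have hNodd : ∀ t ∈ Set.Ioo (-ε) ε, N (-t) = -N t := by
    intro t ht
    have ht' : -t ∈ Set.Ioo (-ε) ε := ⟨by linarith [ht.2], by linarith [ht.1]⟩
    show -t * dIoc ε f₂ (-t) - f₂ (-t) = -(t * dIoc ε f₂ t - f₂ t)
    rw [hdI f₂ _ ht', hdI f₂ _ ht, hd₂even t ht, hodd t ht]; ring
  have hMN : ∀ t : ℝ, t * M t = N t := by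
    intro t
    have := sub_smul_dslope N 0 t
    simp only [sub_zero, smul_eq_mul, hN0] at this
    rw [hMdef]; exact this
  have hgNM : ∀ t : ℝ, t * gN t = M t := by
    intro t
    have := sub_smul_dslope M 0 t
    simp only [sub_zero, smul_eq_mul, hM0] at this
    rw [hgNdef]; exact this
  have hgDf : ∀ t : ℝ, t * gD t = f₂ t := by
    intro t
    have := sub_smul_dslope f₂ 0 t
    simp only [sub_zero, smul_eq_mul, hf₂0] at this
    rw [hgDdef]; exact this
  have hMeven : ∀ᶠ t in nhds (0:ℝ), M (-t) = M t := by
    filter_upwards [isOpen_Ioo.mem_nhds h0oo] with t ht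
    rcases eq_or_ne t 0 with rfl | h
    · simp
    · have e1 := hMN t
      have e2 := hMN (-t)
      rw [hNodd t ht] at e2
      have h3 : t * M (-t) = t * M t := by linear_combination -e1 - e2
      exact mul_left_cancel₀ h h3
  have hgN0 : gN 0 = 0 := by
    rw [hgNdef, dslope_same]
    exact aux_deriv_even_zero hMeven
  -- key identity for the quotient on (0, ε]
  set Qf : ℝ → ℝ := fun t => gN t / gD t with hQdef
  have hQ : ∀ t ∈ Set.Ioc 0 ε, Qf t = dIoc ε f₂ t / f₂ t - 1/t := by
    intro t ht
    have ht0 : t ≠ 0 := ne_of_gt ht.1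
    have hbt : f₂ t ≠ 0 := ne_of_gt (hpos₂ t ht)
    have e1 := hgNM t
    have e2 := hMN t
    have e3 := hgDf t
    have hgDt : gD t ≠ 0 := by
      intro h; rw [h, mul_zero] at e3; exact hbt e3.symm
    have hNt : N t = t * dIoc ε f₂ t - f₂ t := rfl
    have hgDt : gD t = f₂ t / t := by rw [eq_div_iff ht0]; linear_combination e3
    have hgNt : gN t = (t * dIoc ε f₂ t - f₂ t) / t^2 := by
      rw [eq_div_iff (pow_ne_zero 2 ht0)]
      linear_combination t * e1 + e2 + hNt
    rw [hQdef]
    simp only []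
    rw [hgNt, hgDt]
    field_simp
  -- square facts
  have hμμ : Real.sqrt lam * Real.sqrt lam = lam := Real.mul_self_sqrt hlam.le
  have hσσ : Real.sqrt ((d₁:ℝ)-1) * Real.sqrt ((d₁:ℝ)-1) = (d₁:ℝ)-1 :=
    Real.mul_self_sqrt (by linarith)
  have hσ0 : Real.sqrt ((d₁:ℝ)-1) ≠ 0 := by
    rw [Real.sqrt_ne_zero']; linarith
  refine ⟨fun u => (WithLp.toLp 2 ![Real.sqrt ((d₁:ℝ)-1)/f₁ u - α,
      (d₁:ℝ) * dIoc ε f₁ u / f₁ u,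
      (d₁:ℝ) * dIoc ε f₁ u / f₁ u + (d₂:ℝ) * Qf u,
      α, Real.sqrt lam] : EuclideanSpace ℝ (Fin 5)), ?_, ?_, ?_, ?_⟩
  · -- smoothness on Icc 0 ε
    intro t ht
    have hf₁W : ContDiffWithinAt ℝ (⊤ : ℕ∞) f₁ (Set.Icc 0 ε) t := (hsmooth₁.mono hεS) t ht
    have hf₁'W : ContDiffWithinAt ℝ (⊤ : ℕ∞) (dIoc ε f₁) (Set.Icc 0 ε) t := (hs₁'.mono hεS) t ht
    have hf₂W : ContDiffWithinAt ℝ (⊤ : ℕ∞) f₂ (Set.Icc 0 ε) t := (hsmooth₂.mono hεS) t ht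
    have hf₂'W : ContDiffWithinAt ℝ (⊤ : ℕ∞) (dIoc ε f₂) (Set.Icc 0 ε) t := (hs₂'.mono hεS) t ht
    have ha : f₁ t ≠ 0 := ne_of_gt (hpos₁ t ht)
    have hQW : ContDiffWithinAt ℝ (⊤ : ℕ∞) Qf (Set.Icc 0 ε) t := by
      rcases eq_or_lt_of_le ht.1 with h0 | h0
      · have : ContDiffAt ℝ (⊤ : ℕ∞) (fun u => gN u / gD u) 0 :=
          (hangN.contDiffAt (isOpen_Ioo.mem_nhds h0oo)).div
            (hangD.contDiffAt (isOpen_Ioo.mem_nhds h0oo)) (by rw [hgD0]; exact one_ne_zero)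
        rw [← h0]
        exact this.contDiffWithinAt
      · have htIoc : t ∈ Set.Ioc 0 ε := ⟨h0, ht.2⟩
        have hb : f₂ t ≠ 0 := ne_of_gt (hpos₂ t htIoc)
        have hw : ContDiffWithinAt ℝ (⊤ : ℕ∞) (fun u => dIoc ε f₂ u / f₂ u - 1/u)
            (Set.Icc 0 ε) t :=
          (hf₂'W.div hf₂W hb).sub (contDiffWithinAt_const.div contDiffWithinAt_id
            (ne_of_gt h0))
        refine hw.congr_of_eventuallyEq ?_ (hQ t htIoc)
        filter_upwards [self_mem_nhdsWithin,
          (eventually_gt_nhds h0).filter_mono nhdsWithin_le_nhds] with u hu hu'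
        exact hQ u ⟨hu', hu.2⟩
    refine contDiffWithinAt_euclidean.2 fun i => ?_
    fin_cases i
    · exact (contDiffWithinAt_const.div hf₁W ha).sub contDiffWithinAt_const
    · exact (contDiffWithinAt_const.mul hf₁'W).div hf₁W ha
    · exact ((contDiffWithinAt_const.mul hf₁'W).div hf₁W ha).add
        (contDiffWithinAt_const.mul hQW)
    · exact contDiffWithinAt_const
    · exact contDiffWithinAt_const
  · -- matches etaOf on Ioc 0 ε
    intro t ht
    ext i
    fin_cases i <;> simp [etaOf]
    rw [hQ t ht]; ring
  · -- value at 0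
    have hdI₁0 : dIoc ε f₁ 0 = 0 := by rw [hdI f₁ 0 h0oo]; exact hf₁d0
    have hQf0 : Qf 0 = 0 := by rw [hQdef]; simp [hgN0]
    funext i
    fin_cases i <;> simp [hdI₁0, hQf0]
    rw [hic₁]
    field_simp
    ring
  · -- the ODE
    intro t ht
    have ht0 : 0 < t := ht.1
    have htIcc : t ∈ Set.Icc 0 ε := ⟨le_of_lt ht0, ht.2⟩
    have htS : t ∈ Set.Ioc (-ε) ε := hεS htIcc
    have ha : (0:ℝ) < f₁ t := hpos₁ t htIcc
    have hb : (0:ℝ) < f₂ t := hpos₂ t ht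
    have hD₁ : HasDerivWithinAt f₁ (dIoc ε f₁ t) (Set.Icc 0 ε) t :=
      ((hsmooth₁.differentiableOn (by simp) t htS).hasDerivWithinAt).mono hεS
    have hD₁' : HasDerivWithinAt (dIoc ε f₁) (dIoc ε (dIoc ε f₁) t) (Set.Icc 0 ε) t :=
      ((hs₁'.differentiableOn (by simp) t htS).hasDerivWithinAt).mono hεS
    have hD₂ : HasDerivWithinAt f₂ (dIoc ε f₂ t) (Set.Icc 0 ε) t :=
      ((hsmooth₂.differentiableOn (by simp) t htS).hasDerivWithinAt).mono hεS
    have hD₂' : HasDerivWithinAt (dIoc ε f₂) (dIoc ε (dIoc ε f₂) t) (Set.Icc 0 ε) t :=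
      ((hs₂'.differentiableOn (by simp) t htS).hasDerivWithinAt).mono hεS
    have u0 : HasDerivWithinAt (fun u => Real.sqrt ((d₁:ℝ)-1) / f₁ u - α)
        ((0 * f₁ t - Real.sqrt ((d₁:ℝ)-1) * dIoc ε f₁ t) / f₁ t ^ 2 - 0)
        (Set.Icc 0 ε) t :=
      ((hasDerivWithinAt_const t _ _).div hD₁ ha.ne').sub (hasDerivWithinAt_const t _ _)
    have u1 : HasDerivWithinAt (fun u => (d₁:ℝ) * dIoc ε f₁ u / f₁ u)
        (((d₁:ℝ) * dIoc ε (dIoc ε f₁) t * f₁ t - (d₁:ℝ) * dIoc ε f₁ t * dIoc ε f₁ t)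
          / f₁ t ^ 2) (Set.Icc 0 ε) t :=
      (hD₁'.const_mul (d₁:ℝ)).div hD₁ ha.ne'
    have uw : HasDerivWithinAt (fun u => dIoc ε f₂ u / f₂ u - 1/u)
        ((dIoc ε (dIoc ε f₂) t * f₂ t - dIoc ε f₂ t * dIoc ε f₂ t) / f₂ t ^ 2 -
          (0 * t - 1 * 1) / t ^ 2) (Set.Icc 0 ε) t :=
      (hD₂'.div hD₂ hb.ne').sub ((hasDerivWithinAt_const t _ 1).div
        (hasDerivWithinAt_id t _) ht0.ne')
    have uQ : HasDerivWithinAt Qf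
        ((dIoc ε (dIoc ε f₂) t * f₂ t - dIoc ε f₂ t * dIoc ε f₂ t) / f₂ t ^ 2 -
          (0 * t - 1 * 1) / t ^ 2) (Set.Icc 0 ε) t := by
      refine uw.congr_of_eventuallyEq ?_ (hQ t ht)
      filter_upwards [self_mem_nhdsWithin,
        (eventually_gt_nhds ht0).filter_mono nhdsWithin_le_nhds] with u hu hu'
      exact hQ u ⟨hu', hu.2⟩
    have uvec : HasDerivWithinAt (𝕜 := ℝ) (F := EuclideanSpace ℝ (Fin 5))
        (fun u => (WithLp.toLp 2 ![Real.sqrt ((d₁:ℝ)-1)/f₁ u - α,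
        (d₁:ℝ) * dIoc ε f₁ u / f₁ u,
        (d₁:ℝ) * dIoc ε f₁ u / f₁ u + (d₂:ℝ) * Qf u,
        α, Real.sqrt lam] : EuclideanSpace ℝ (Fin 5)))
        (WithLp.toLp 2 ![(0 * f₁ t - Real.sqrt ((d₁:ℝ)-1) * dIoc ε f₁ t) / f₁ t ^ 2 - 0,
          (((d₁:ℝ) * dIoc ε (dIoc ε f₁) t * f₁ t - (d₁:ℝ) * dIoc ε f₁ t * dIoc ε f₁ t)
            / f₁ t ^ 2),
          (((d₁:ℝ) * dIoc ε (dIoc ε f₁) t * f₁ t - (d₁:ℝ) * dIoc ε f₁ t * dIoc ε f₁ t)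
            / f₁ t ^ 2) + (d₂:ℝ) *
            ((dIoc ε (dIoc ε f₂) t * f₂ t - dIoc ε f₂ t * dIoc ε f₂ t) / f₂ t ^ 2 -
              (0 * t - 1 * 1) / t ^ 2),
          0, 0] : EuclideanSpace ℝ (Fin 5)) (Set.Icc 0 ε) t := by
      apply aux_hasDerivWithinAt_euclidean
      intro i
      fin_cases i
      · exact u0
      · exact u1
      · exact u1.add (uQ.const_mul (d₂:ℝ))
      · exact hasDerivWithinAt_const t _ _
      · exact hasDerivWithinAt_const t _ _
    have h1 := hE1 t ht
    have h2 := hE2 t ht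
    have hrw : (1/t) • Lop d₁ d₂ ((WithLp.toLp 2 ![Real.sqrt ((d₁:ℝ)-1)/f₁ t - α,
        (d₁:ℝ) * dIoc ε f₁ t / f₁ t,
        (d₁:ℝ) * dIoc ε f₁ t / f₁ t + (d₂:ℝ) * Qf t,
        α, Real.sqrt lam] : EuclideanSpace ℝ (Fin 5)))
        + Bmap d₁ d₂ (WithLp.toLp 2 ![Real.sqrt ((d₁:ℝ)-1)/f₁ t - α,
        (d₁:ℝ) * dIoc ε f₁ t / f₁ t,
        (d₁:ℝ) * dIoc ε f₁ t / f₁ t + (d₂:ℝ) * Qf t,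
        α, Real.sqrt lam]) (WithLp.toLp 2 ![Real.sqrt ((d₁:ℝ)-1)/f₁ t - α,
        (d₁:ℝ) * dIoc ε f₁ t / f₁ t,
        (d₁:ℝ) * dIoc ε f₁ t / f₁ t + (d₂:ℝ) * Qf t,
        α, Real.sqrt lam])
        = (WithLp.toLp 2 ![(0 * f₁ t - Real.sqrt ((d₁:ℝ)-1) * dIoc ε f₁ t) / f₁ t ^ 2 - 0,
          (((d₁:ℝ) * dIoc ε (dIoc ε f₁) t * f₁ t - (d₁:ℝ) * dIoc ε f₁ t * dIoc ε f₁ t)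
            / f₁ t ^ 2),
          (((d₁:ℝ) * dIoc ε (dIoc ε f₁) t * f₁ t - (d₁:ℝ) * dIoc ε f₁ t * dIoc ε f₁ t)
            / f₁ t ^ 2) + (d₂:ℝ) *
            ((dIoc ε (dIoc ε f₂) t * f₂ t - dIoc ε f₂ t * dIoc ε f₂ t) / f₂ t ^ 2 -
              (0 * t - 1 * 1) / t ^ 2),
          0, 0] : EuclideanSpace ℝ (Fin 5)) := by
      rw [hQ t ht]
      ext i
      fin_cases i <;>
        simp +decide [Lop, Lmat, Bmap, Matrix.mulVec, dotProduct, Fin.sum_univ_five,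
          PiLp.add_apply, PiLp.smul_apply, smul_eq_mul, Matrix.vecHead, Matrix.vecTail]
      · field_simp
        ring
      · field_simp [hd₁0]
        field_simp [hb.ne'] at h2
        linear_combination (-2 * t) * h2
          + (-2 * t * f₁ t^2 * f₂ t) * hμμ
          + (2 * t * f₂ t) * hσσ
      · field_simp [hd₂0]
        field_simp at h1
        linear_combination (-(f₁ t * (d₂:ℝ) * f₂ t * t^2)) * h1
          + (-(f₁ t^2 * (d₂:ℝ) * f₂ t^2 * t^2)) * hμμ
    rw [← hrw] at uvec
    exact uvec
end
end

section
/- Let d₁, d₂ ≥ 2 be integers, t* > 0, and let η̂ : [0, t*] → ℝ⁵ be continuous and satisfy ∫₀^{t*} (4·C(d₁, d₂, η̂(s)) + 1) ds ≤ 500. Suppose F : [0, t*] → ℝ⁵ is continuous, and μ : [0, t*] → ℝ⁵ is continuous with μ(0) = 0, differentiable on (0, t*], and satisfies μ'(t) = (1/t)·L_{d₁d₂}·μ(t) + 2·B_{d₁d₂}(η̂(t), μ(t)) + F(t) for all t ∈ (0, t*]. Then sup_{t ∈ [0,t*]} |μ(t)| ≤ e²⁵⁰ · (∫₀^{t*}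 |F(s)|² ds)^{1/2}. -/
noncomputable section

/-- The constant `C(d₁, d₂, y)` from Lemma `Btermok`. -/
def Cconst (d₁ d₂ : ℕ) (y : EuclideanSpace ℝ (Fin 5)) : ℝ :=
  |y 0| * ((d₁:ℝ) + 1 / (4 * (d₁:ℝ)))
    + |y 1| * (1 / (2 * (d₁:ℝ)) + 3 / (2 * (d₂:ℝ)) + 1/4)
    + |y 2| * (1 / (2 * (d₂:ℝ)) + 1/2)
    + |y 3| * ((d₁:ℝ) + 1 / (4 * (d₁:ℝ)))
    + |y 4| * (((d₁:ℝ) + 1) / 2)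

/-!
The energy `‖μ‖²` satisfies `(‖μ‖²)' = 2⟪μ, μ'⟫ ≤ (4 C(η̂) + 1) ‖μ‖² + ‖F‖²`: the singular term
`(1/t) L` is dissipative (`⟪x, L x⟫ ≤ 0` as soon as `d₂ ≥ 2`), `⟪x, B(e, x)⟫` is linear in `e`
with `i`-th coefficient a quadratic form in `x` of size at most the `i`-th coefficient of
`C(d₁, d₂, ·)` times `‖x‖²`, and `2⟪x, F⟫ ≤ ‖x‖² + ‖F‖²`. Grönwall's lemma with variable
coefficient, started from `μ 0 = 0`, gives `‖μ t‖² ≤ e⁵⁰⁰ ∫ ‖F‖²`.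
-/

open Set intervalIntegral Real
open scoped RealInnerProductSpace

theorem hasDerivAt_integral_of_continuousOn_Icc {E : Type*} [NormedAddCommGroup E]
    [NormedSpace ℝ E] [CompleteSpace E] {f : ℝ → E} {c d s : ℝ}
    (hf : ContinuousOn f (Icc c d)) (hs : s ∈ Ioo c d) :
    HasDerivAt (fun u => ∫ x in c..u, f x) (f s) s :=
  integral_hasDerivAt_right
    ((hf.mono (Icc_subset_Icc_right hs.2.le)).intervalIntegrable_of_Icc hs.1.le)
    ((hf.mono Ioo_subset_Icc_self).stronglyMeasurableAtFilter isOpen_Ioo s hs)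
    (hf.continuousAt (Icc_mem_nhds hs.1 hs.2))

theorem continuousOn_primitive_Icc {E : Type*} [NormedAddCommGroup E] [NormedSpace ℝ E]
    {f : ℝ → E} {c d : ℝ} (hcd : c ≤ d) (hf : ContinuousOn f (Icc c d)) :
    ContinuousOn (fun u => ∫ x in c..u, f x) (Icc c d) := by
  rw [← uIcc_of_le hcd] at hf ⊢
  exact continuousOn_primitive_interval hf.integrableOn_uIcc

theorem integral_le_integral_of_nonneg_of_mem_Icc {f : ℝ → ℝ} {t T : ℝ}
    (hf : ContinuousOn f (Icc 0 T)) (hf₀ : ∀ s, 0 ≤ f s) (ht : t ∈ Icc 0 T) :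
    ∫ s in 0..t, f s ≤ ∫ s in 0..T, f s :=
  integral_mono_interval le_rfl ht.1 ht.2 (Filter.Eventually.of_forall hf₀)
    (hf.intervalIntegrable_of_Icc (ht.1.trans ht.2))

theorem le_exp_integral_mul_integral_of_hasDerivAt {a b g g' : ℝ → ℝ} {T : ℝ}
    (ha : ContinuousOn a (Icc 0 T)) (hb : ContinuousOn b (Icc 0 T))
    (ha₀ : ∀ s ∈ Icc 0 T, 0 ≤ a s) (hb₀ : ∀ s ∈ Icc 0 T, 0 ≤ b s)
    (hg : ContinuousOn g (Icc 0 T)) (hg₀ : g 0 ≤ 0)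
    (hg' : ∀ s ∈ Ioo 0 T, HasDerivAt g (g' s) s)
    (hle : ∀ s ∈ Ioo 0 T, g' s ≤ a s * g s + b s) {t : ℝ} (ht : t ∈ Icc 0 T) :
    g t ≤ exp (∫ s in 0..t, a s) * ∫ s in 0..t, b s := by
  have hT : 0 ≤ T := ht.1.trans ht.2
  set A := fun u => ∫ s in 0..u, a s
  have hA₀ : ∀ u ∈ Icc 0 T, 0 ≤ A u := fun u hu =>
    integral_nonneg hu.1 fun s hs => ha₀ s ⟨hs.1, hs.2.trans hu.2⟩
  -- `g e^{-A} - ∫ b` is nonincreasing, because `e^{-A} ≤ 1` and `b ≥ 0`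
  set h := fun u => g u * exp (-A u) - ∫ s in 0..u, b s
  have h_anti : AntitoneOn h (Icc 0 T) := by
    refine antitoneOn_of_hasDerivWithinAt_nonpos (convex_Icc 0 T)
      (f' := fun s => g' s * exp (-A s) + g s * (exp (-A s) * -a s) - b s) ?_ (fun s hs => ?_)
      (fun s hs => ?_)
    · exact (hg.mul (continuousOn_primitive_Icc hT ha).neg.rexp).sub
        (continuousOn_primitive_Icc hT hb)
    · rw [interior_Icc] at hs
      exact (((hg' s hs).mul (hasDerivAt_integral_of_continuousOn_Icc ha hs).neg.exp).sub
        (hasDerivAt_integral_of_continuousOn_Icc hb hs)).hasDerivWithinAt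
    · rw [interior_Icc] at hs
      have hsI : s ∈ Icc 0 T := Ioo_subset_Icc_self hs
      have : exp (-A s) ≤ 1 := exp_le_one_iff.2 (neg_nonpos.2 (hA₀ s hsI))
      nlinarith [hle s hs, exp_pos (-A s), hb₀ s hsI]
  have h_zero : h 0 = g 0 := by simp [h, A]
  have : g t * exp (-A t) ≤ ∫ s in 0..t, b s :=
    sub_nonpos.1 ((h_anti ⟨le_rfl, hT⟩ ht ht.1).trans (h_zero ▸ hg₀))
  calc g t = exp (A t) * (g t * exp (-A t)) := by rw [mul_left_comm, ← exp_add]; simp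
    _ ≤ exp (A t) * ∫ s in 0..t, b s := by gcongr

theorem EuclideanSpace.norm_sq_fin_five (x : EuclideanSpace ℝ (Fin 5)) :
    ‖x‖ ^ 2 = x 0 ^ 2 + x 1 ^ 2 + x 2 ^ 2 + x 3 ^ 2 + x 4 ^ 2 := by
  simp [EuclideanSpace.real_norm_sq_eq, Fin.sum_univ_five]

theorem inner_Lop_self (d₁ d₂ : ℕ) (x : EuclideanSpace ℝ (Fin 5)) :
    ⟪x, Lop d₁ d₂ x⟫ = -d₂ * x 1 ^ 2 + 2 * x 1 * x 2 - 2 * x 2 ^ 2 := by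
  simp [Lop, Lmat, PiLp.inner_apply, Matrix.mulVec, dotProduct, Fin.sum_univ_five]
  ring

theorem inner_Lop_self_nonpos (d₁ : ℕ) {d₂ : ℕ} (hd₂ : 2 ≤ d₂) (x : EuclideanSpace ℝ (Fin 5)) :
    ⟪x, Lop d₁ d₂ x⟫ ≤ 0 := by
  have : (2 : ℝ) ≤ d₂ := by exact_mod_cast hd₂
  rw [inner_Lop_self]
  nlinarith [sq_nonneg (x 1 - x 2), sq_nonneg (x 1), sq_nonneg (x 2)]

theorem inner_Bmap_self (d₁ d₂ : ℕ) (e x : EuclideanSpace ℝ (Fin 5)) :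
    ⟪x, Bmap d₁ d₂ e x⟫ =
      e 0 * ((d₁ - (d₁ : ℝ)⁻¹ / 2) * (x 0 * x 1) + d₁ * (x 1 * x 3))
      + e 1 * (-((d₁ : ℝ)⁻¹ / 2) * (x 0 * x 3 + x 0 ^ 2)
        - (1 / 2 + (d₁ : ℝ)⁻¹ + (d₂ : ℝ)⁻¹) * (x 1 * x 2) + (d₂ : ℝ)⁻¹ * x 2 ^ 2)
      + e 2 * (-(1 / 2) * x 1 ^ 2 - (d₂ : ℝ)⁻¹ * x 2 ^ 2 + (d₂ : ℝ)⁻¹ * (x 1 * x 2))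
      + e 3 * ((d₁ - (d₁ : ℝ)⁻¹ / 2) * (x 0 * x 1) + d₁ * (x 1 * x 3))
      + e 4 * (-d₁ * (x 1 * x 4) - x 2 * x 4) := by
  simp [Bmap, PiLp.inner_apply, Fin.sum_univ_five]
  ring

theorem mul_le_abs_mul_of_abs_le {c m k : ℝ} (h : |m| ≤ k) : c * m ≤ |c| * k :=
  (le_abs_self _).trans ((abs_mul c m).trans_le (mul_le_mul_of_nonneg_left h (abs_nonneg c)))

section CoefficientBounds

-- The coefficients of `e 0, e 1, e 2, e 4` in `inner_Bmap_self` (that of `e 3` equals that of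
-- `e 0`), written with `A = d₁`, `a = d₁⁻¹`, `b = d₂⁻¹`.
variable {A a b : ℝ} (x₀ x₁ x₂ x₃ x₄ : ℝ)

theorem abs_Bcoeff₀_le (ha : 0 ≤ a) (haA : a ≤ 2 * A) :
    |(A - a / 2) * (x₀ * x₁) + A * (x₁ * x₃)|
      ≤ (A + a / 4) * (x₀ ^ 2 + x₁ ^ 2 + x₂ ^ 2 + x₃ ^ 2 + x₄ ^ 2) := by
  have hA : 0 ≤ A := by linarith
  rw [abs_le]; constructor <;>
  nlinarith [mul_nonneg (by linarith : 0 ≤ A - a / 2) (sq_nonneg (x₀ + x₁)),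
    mul_nonneg (by linarith : 0 ≤ A - a / 2) (sq_nonneg (x₀ - x₁)),
    mul_nonneg hA (sq_nonneg (x₁ + x₃)), mul_nonneg hA (sq_nonneg (x₁ - x₃)),
    mul_nonneg ha (sq_nonneg x₀), mul_nonneg ha (sq_nonneg x₁), mul_nonneg ha (sq_nonneg x₃),
    mul_nonneg hA (sq_nonneg x₀), mul_nonneg hA (sq_nonneg x₃),
    mul_nonneg (by linarith : 0 ≤ A + a / 4) (sq_nonneg x₂),
    mul_nonneg (by linarith : 0 ≤ A + a / 4) (sq_nonneg x₄)]

theorem abs_Bcoeff₁_le (ha : 0 ≤ a) (ha₁ : a ≤ 1) (hb : 0 ≤ b) :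
    |-(a / 2) * (x₀ * x₃ + x₀ ^ 2) - (1 / 2 + a + b) * (x₁ * x₂) + b * x₂ ^ 2|
      ≤ (a / 2 + 3 * b / 2 + 1 / 4) * (x₀ ^ 2 + x₁ ^ 2 + x₂ ^ 2 + x₃ ^ 2 + x₄ ^ 2) := by
  rw [abs_le]; constructor <;>
  nlinarith [mul_nonneg ha (sq_nonneg (x₀ + x₃)), mul_nonneg ha (sq_nonneg (x₀ - x₃)),
    mul_nonneg (by linarith : (0:ℝ) ≤ 1 / 2 + a + b) (sq_nonneg (x₁ + x₂)),
    mul_nonneg (by linarith : (0:ℝ) ≤ 1 / 2 + a + b) (sq_nonneg (x₁ - x₂)),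
    mul_nonneg (by linarith : 0 ≤ 1 - a) (sq_nonneg x₀),
    mul_nonneg ha (sq_nonneg x₀), mul_nonneg hb (sq_nonneg x₀),
    mul_nonneg ha (sq_nonneg x₁), mul_nonneg hb (sq_nonneg x₁),
    mul_nonneg ha (sq_nonneg x₃), mul_nonneg hb (sq_nonneg x₃),
    mul_nonneg ha (sq_nonneg x₄), mul_nonneg hb (sq_nonneg x₄),
    sq_nonneg x₀, sq_nonneg x₃, sq_nonneg x₄]

theorem abs_Bcoeff₂_le (hb : 0 ≤ b) (hb₂ : b ≤ 1 / 2) :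
    |-(1 / 2) * x₁ ^ 2 - b * x₂ ^ 2 + b * (x₁ * x₂)|
      ≤ (b / 2 + 1 / 2) * (x₀ ^ 2 + x₁ ^ 2 + x₂ ^ 2 + x₃ ^ 2 + x₄ ^ 2) := by
  rw [abs_le]; constructor <;>
  nlinarith [mul_nonneg hb (sq_nonneg (x₁ + x₂)), mul_nonneg hb (sq_nonneg (x₁ - x₂)),
    mul_nonneg (by linarith : 0 ≤ 1 - 2 * b) (sq_nonneg x₂),
    mul_nonneg (by linarith : 0 ≤ b / 2 + 1 / 2) (sq_nonneg x₀),
    mul_nonneg (by linarith : 0 ≤ b / 2 + 1 / 2) (sq_nonneg x₃),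
    mul_nonneg (by linarith : 0 ≤ b / 2 + 1 / 2) (sq_nonneg x₄),
    mul_nonneg hb (sq_nonneg x₁), mul_nonneg hb (sq_nonneg x₂), sq_nonneg x₁, sq_nonneg x₂]

theorem abs_Bcoeff₄_le (hA : 0 ≤ A) :
    |-A * (x₁ * x₄) - x₂ * x₄| ≤ (A + 1) / 2 * (x₀ ^ 2 + x₁ ^ 2 + x₂ ^ 2 + x₃ ^ 2 + x₄ ^ 2) := by
  rw [abs_le]; constructor <;>
  nlinarith [mul_nonneg hA (sq_nonneg (x₁ + x₄)), mul_nonneg hA (sq_nonneg (x₁ - x₄)),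
    sq_nonneg (x₂ + x₄), sq_nonneg (x₂ - x₄), mul_nonneg hA (sq_nonneg x₂), sq_nonneg x₁,
    mul_nonneg (by linarith : 0 ≤ (A + 1) / 2) (sq_nonneg x₀),
    mul_nonneg (by linarith : 0 ≤ (A + 1) / 2) (sq_nonneg x₃)]
end CoefficientBounds

theorem inner_Bmap_self_le {d₁ d₂ : ℕ} (hd₁ : 2 ≤ d₁) (hd₂ : 2 ≤ d₂)
    (e x : EuclideanSpace ℝ (Fin 5)) :
    ⟪x, Bmap d₁ d₂ e x⟫ ≤ Cconst d₁ d₂ e * ‖x‖ ^ 2 := by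
  have hC : Cconst d₁ d₂ e = |e 0| * (d₁ + (d₁ : ℝ)⁻¹ / 4)
      + |e 1| * ((d₁ : ℝ)⁻¹ / 2 + 3 * (d₂ : ℝ)⁻¹ / 2 + 1 / 4) + |e 2| * ((d₂ : ℝ)⁻¹ / 2 + 1 / 2)
      + |e 3| * (d₁ + (d₁ : ℝ)⁻¹ / 4) + |e 4| * ((d₁ + 1) / 2) := by
    unfold Cconst; ring
  rw [inner_Bmap_self, hC, EuclideanSpace.norm_sq_fin_five]
  have hA : (2 : ℝ) ≤ d₁ := by exact_mod_cast hd₁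
  have ha₂ : (d₁ : ℝ)⁻¹ ≤ 1 / 2 := by rw [one_div]; exact inv_anti₀ two_pos hA
  have hb₂ : (d₂ : ℝ)⁻¹ ≤ 1 / 2 := by rw [one_div]; exact inv_anti₀ two_pos (by exact_mod_cast hd₂)
  have ha : (0 : ℝ) ≤ (d₁ : ℝ)⁻¹ := by positivity
  have hb : (0 : ℝ) ≤ (d₂ : ℝ)⁻¹ := by positivity
  have q₀ := abs_Bcoeff₀_le (x 0) (x 1) (x 2) (x 3) (x 4) ha (A := d₁) (by linarith)
  have q₁ := abs_Bcoeff₁_le (x 0) (x 1) (x 2) (x 3) (x 4) ha (by linarith) hb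
  have q₂ := abs_Bcoeff₂_le (x 0) (x 1) (x 2) (x 3) (x 4) hb hb₂
  have q₄ := abs_Bcoeff₄_le (x 0) (x 1) (x 2) (x 3) (x 4) (Nat.cast_nonneg d₁)
  linarith [mul_le_abs_mul_of_abs_le (c := e 0) q₀, mul_le_abs_mul_of_abs_le (c := e 1) q₁,
    mul_le_abs_mul_of_abs_le (c := e 2) q₂, mul_le_abs_mul_of_abs_le (c := e 3) q₀,
    mul_le_abs_mul_of_abs_le (c := e 4) q₄]

theorem continuous_Cconst (d₁ d₂ : ℕ) : Continuous (Cconst d₁ d₂) := by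
  have := fun i : Fin 5 => (EuclideanSpace.proj (𝕜 := ℝ) i).continuous
  unfold Cconst
  fun_prop

theorem Cconst_nonneg (d₁ d₂ : ℕ) (e : EuclideanSpace ℝ (Fin 5)) : 0 ≤ Cconst d₁ d₂ e := by
  unfold Cconst
  positivity

theorem two_inner_linearised_rhs_le {d₁ d₂ : ℕ} (hd₁ : 2 ≤ d₁) (hd₂ : 2 ≤ d₂) {t : ℝ} (ht : 0 ≤ t)
    (e x f : EuclideanSpace ℝ (Fin 5)) :
    2 * ⟪x, (1 / t) • Lop d₁ d₂ x + (2 : ℝ) • Bmap d₁ d₂ e x + f⟫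
      ≤ (4 * Cconst d₁ d₂ e + 1) * ‖x‖ ^ 2 + ‖f‖ ^ 2 := by
  rw [inner_add_right, inner_add_right, real_inner_smul_right, real_inner_smul_right]
  have hL := mul_nonpos_of_nonneg_of_nonpos (one_div_nonneg.2 ht) (inner_Lop_self_nonpos d₁ hd₂ x)
  have hB := inner_Bmap_self_le hd₁ hd₂ e x
  have hf : 2 * ⟪x, f⟫ ≤ ‖x‖ ^ 2 + ‖f‖ ^ 2 :=
    (mul_le_mul_of_nonneg_left (real_inner_le_norm x f) zero_le_two).trans
      (by nlinarith [sq_nonneg (‖x‖ - ‖f‖)])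
  linarith

theorem linearised_gronwall_bound_general
    (d₁ d₂ : ℕ) (hd₁ : 2 ≤ d₁) (hd₂ : 2 ≤ d₂)
    (tstar : ℝ)
    (ηhat : ℝ → EuclideanSpace ℝ (Fin 5))
    (hηc : ContinuousOn ηhat (Set.Icc 0 tstar))
    (hint : (∫ s in (0:ℝ)..tstar, (4 * Cconst d₁ d₂ (ηhat s) + 1)) ≤ 500)
    (F μ : ℝ → EuclideanSpace ℝ (Fin 5))
    (hF : ContinuousOn F (Set.Icc 0 tstar))
    (hμc : ContinuousOn μ (Set.Icc 0 tstar)) (hμ0 : μ 0 = 0)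
    (hode : ∀ t ∈ Set.Ioc 0 tstar,
      HasDerivWithinAt μ
        ((1/t) • Lop d₁ d₂ (μ t) + (2:ℝ) • Bmap d₁ d₂ (ηhat t) (μ t) + F t)
        (Set.Icc 0 tstar) t) :
    ∀ t ∈ Set.Icc 0 tstar,
      ‖μ t‖ ≤ Real.exp 250 * Real.sqrt (∫ s in (0:ℝ)..tstar, ‖F s‖ ^ 2) := by
  intro t ht
  have ha : ContinuousOn (fun s => 4 * Cconst d₁ d₂ (ηhat s) + 1) (Icc 0 tstar) :=
    (continuousOn_const.mul ((continuous_Cconst d₁ d₂).comp_continuousOn hηc)).add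
      continuousOn_const
  have ha₀ (s : ℝ) : 0 ≤ 4 * Cconst d₁ d₂ (ηhat s) + 1 := by
    linarith [Cconst_nonneg d₁ d₂ (ηhat s)]
  have hb : ContinuousOn (fun s => ‖F s‖ ^ 2) (Icc 0 tstar) := hF.norm.pow 2
  have hμt := le_exp_integral_mul_integral_of_hasDerivAt ha hb (fun s _ => ha₀ s)
    (fun s _ => sq_nonneg ‖F s‖) (hμc.norm.pow 2) (by simp [hμ0])
    (fun s hs => ((hode s (Ioo_subset_Ioc_self hs)).hasDerivAt (Icc_mem_nhds hs.1 hs.2)).norm_sq)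
    (fun s hs => two_inner_linearised_rhs_le hd₁ hd₂ hs.1.le _ _ _) ht
  have hsq : ‖μ t‖ ^ 2 ≤ exp 250 ^ 2 * ∫ s in 0..tstar, ‖F s‖ ^ 2 := by
    refine hμt.trans
      (mul_le_mul ?_ ?_ (integral_nonneg ht.1 fun s _ => sq_nonneg _) (by positivity))
    · exact (exp_le_exp.2 ((integral_le_integral_of_nonneg_of_mem_Icc ha ha₀ ht).trans hint))
        |>.trans_eq (by rw [← exp_nat_mul]; norm_num)
    · exact integral_le_integral_of_nonneg_of_mem_Icc hb (fun s => sq_nonneg _) ht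
  calc ‖μ t‖ = sqrt (‖μ t‖ ^ 2) := (sqrt_sq (norm_nonneg _)).symm
    _ ≤ sqrt (exp 250 ^ 2 * ∫ s in 0..tstar, ‖F s‖ ^ 2) := sqrt_le_sqrt hsq
    _ = exp 250 * sqrt (∫ s in 0..tstar, ‖F s‖ ^ 2) := by
      rw [sqrt_mul (by positivity), sqrt_sq (exp_pos _).le]

/-- Grönwall-type bound for the inhomogeneous linearised equation
`μ' = (1/t) L μ + 2 B(η̂, μ) + F`, `μ(0) = 0`: if `∫₀^{t*} (4 C(d₁,d₂,η̂) + 1) ≤ 500`, then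
`sup_{[0,t*]} |μ| ≤ e²⁵⁰ ‖F‖_{L²}`. -/
theorem linearised_gronwall_bound
    (d₁ d₂ : ℕ) (hd₁ : 2 ≤ d₁) (hd₂ : 2 ≤ d₂)
    (tstar : ℝ) (h0 : 0 < tstar)
    (ηhat : ℝ → EuclideanSpace ℝ (Fin 5))
    (hηc : ContinuousOn ηhat (Set.Icc 0 tstar))
    (hint : (∫ s in (0:ℝ)..tstar, (4 * Cconst d₁ d₂ (ηhat s) + 1)) ≤ 500)
    (F μ : ℝ → EuclideanSpace ℝ (Fin 5))
    (hF : ContinuousOn F (Set.Icc 0 tstar))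
    (hμc : ContinuousOn μ (Set.Icc 0 tstar)) (hμ0 : μ 0 = 0)
    (hode : ∀ t ∈ Set.Ioc 0 tstar,
      HasDerivWithinAt μ
        ((1/t) • Lop d₁ d₂ (μ t) + (2:ℝ) • Bmap d₁ d₂ (ηhat t) (μ t) + F t)
        (Set.Icc 0 tstar) t) :
    ∀ t ∈ Set.Icc 0 tstar,
      ‖μ t‖ ≤ Real.exp 250 * Real.sqrt (∫ s in (0:ℝ)..tstar, ‖F s‖ ^ 2) :=
  linearised_gronwall_bound_general d₁ d₂ hd₁ hd₂ tstar ηhat hηc hint F μ hF hμc hμ0 hode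
end
end
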